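/- arXiv:2306.05380 — 7 statements merged into one kernel-verified Lean document; each statement's English description precedes it below -/
import Mathlib

section
/- Under the GoMORE aggregation, the expected squared weight divergence satisfies E[‖ŵ(S,e) − w*‖²] ≤ Σ_{k=1}^K (c²/K) · ( ((K−N)/(N(K−1))) · p_k² − p_k + 1 ), provided ‖w_k − w‖ ≤ c for every k = 1, …, K. -/
open Finset

lemma count_supersets {α : Type*} [DecidableEq α] (s T : Finset α) (N : ℕ)
    (hTs : T ⊆ s) (hTN : T.card ≤ N) :
    ((Finset.powersetCard N s).filter (fun S => T ⊆ S)).card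
      = (s.card - T.card).choose (N - T.card) := by
  rw [show s.card - T.card = (s \ T).card from (Finset.card_sdiff_of_subset hTs).symm,
    ← Finset.card_powersetCard (N - T.card) (s \ T)]
  apply Finset.card_bij' (fun S _ => S \ T) (fun S' _ => S' ∪ T)
  · intro S hS
    simp only [mem_filter, mem_powersetCard] at hS
    simp only [mem_powersetCard]
    refine ⟨sdiff_subset_sdiff hS.1.1 le_rfl, ?_⟩
    rw [Finset.card_sdiff_of_subset hS.2, hS.1.2]
  · intro S' hS'
    simp only [mem_powersetCard] at hS'
    have hd : Disjoint S' T := Finset.disjoint_of_subset_left hS'.1 (Finset.sdiff_disjoint)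
    simp only [mem_filter, mem_powersetCard]
    refine ⟨⟨Finset.union_subset (hS'.1.trans Finset.sdiff_subset) hTs, ?_⟩, Finset.subset_union_right⟩
    rw [Finset.card_union_of_disjoint hd, hS'.2]
    omega
  · intro S hS
    simp only [mem_filter] at hS
    exact Finset.sdiff_union_of_subset hS.2
  · intro S' hS'
    simp only [mem_powersetCard] at hS'
    have hd : Disjoint S' T := Finset.disjoint_of_subset_left hS'.1 (Finset.sdiff_disjoint)
    exact Finset.union_sdiff_cancel_right hd

lemma sum_prod_bool {K : ℕ} (f : Fin K → Bool → ℝ) :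
    ∑ e : Fin K → Bool, ∏ k, f k (e k) = ∏ k, (f k true + f k false) := by
  rw [← Fintype.piFinset_univ]
  rw [← Finset.prod_univ_sum]
  congr 1; ext k
  simp [Finset.sum_ite_eq]

lemma bernoulli_moment {K : ℕ} (p : Fin K → ℝ) (A : Finset (Fin K)) :
    ∑ e : Fin K → Bool, (∏ k, if e k then p k else 1 - p k) *
      (∏ j ∈ A, (if e j then (1:ℝ) else 0)) = ∏ j ∈ A, p j := by
  have h1 : ∀ e : Fin K → Bool,
      (∏ k, if e k then p k else 1 - p k) * (∏ j ∈ A, (if e j then (1:ℝ) else 0))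
      = ∏ k, ((if e k then p k else 1 - p k) * (if k ∈ A then (if e k then (1:ℝ) else 0) else 1)) := by
    intro e
    rw [Finset.prod_mul_distrib]
    congr 1
    rw [Finset.prod_ite_mem, Finset.univ_inter]
  simp_rw [h1]
  rw [sum_prod_bool (fun k b => (if b then p k else 1 - p k) * (if k ∈ A then (if b then (1:ℝ) else 0) else 1))]
  rw [show ∏ j ∈ A, p j = ∏ k, (if k ∈ A then p k else 1) by rw [Finset.prod_ite_mem, Finset.univ_inter]]
  congr 1; ext k
  by_cases h : k ∈ A <;> simp [h] <;> ring


lemma SX_count (K N : ℕ) (hN1 : 1 ≤ N) (hNK : N ≤ K) (k : Fin K) :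
    ∑ S ∈ Finset.powersetCard N (Finset.univ : Finset (Fin K)),
      (if k ∈ S then (1:ℝ) else 0) = ((K-1).choose (N-1) : ℕ) := by
  rw [Finset.sum_boole]
  congr 1
  rw [show (Finset.powersetCard N (Finset.univ : Finset (Fin K))).filter (fun S => k ∈ S)
      = (Finset.powersetCard N (Finset.univ : Finset (Fin K))).filter (fun S => {k} ⊆ S)
      from Finset.filter_congr (fun S _ => by simp)]
  rw [count_supersets _ _ _ (by simp) (by simpa)]
  simp

lemma SXX_count (K N : ℕ) (hN2 : 2 ≤ N) (hNK : N ≤ K) (k l : Fin K) (hkl : k ≠ l) :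
    ∑ S ∈ Finset.powersetCard N (Finset.univ : Finset (Fin K)),
      ((if k ∈ S then (1:ℝ) else 0) * (if l ∈ S then (1:ℝ) else 0))
      = ((K-2).choose (N-2) : ℕ) := by
  have h : ∀ S : Finset (Fin K), (if k ∈ S then (1:ℝ) else 0) * (if l ∈ S then (1:ℝ) else 0)
      = if ({k, l} : Finset (Fin K)) ⊆ S then (1:ℝ) else 0 := by
    intro S
    by_cases h1 : k ∈ S <;> by_cases h2 : l ∈ S <;>
      simp [h1, h2, Finset.insert_subset_iff]
  simp_rw [h]
  rw [Finset.sum_boole]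
  congr 1
  rw [count_supersets _ _ _ (by simp) (by rwa [Finset.card_pair hkl])]
  rw [Finset.card_pair hkl]
  simp

lemma SXX_zero (K : ℕ) (k l : Fin K) (hkl : k ≠ l) :
    ∑ S ∈ Finset.powersetCard 1 (Finset.univ : Finset (Fin K)),
      ((if k ∈ S then (1:ℝ) else 0) * (if l ∈ S then (1:ℝ) else 0)) = 0 := by
  apply Finset.sum_eq_zero
  intro S hS
  rw [Finset.mem_powersetCard] at hS
  obtain ⟨a, rfl⟩ := Finset.card_eq_one.mp hS.2
  by_cases h1 : k = a <;> by_cases h2 : l = a <;> simp_all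



lemma choose_ratio1 (K N : ℕ) (hK : 1 ≤ K) (hN1 : 1 ≤ N) :
    K * (K-1).choose (N-1) = K.choose N * N := by
  have h := Nat.add_one_mul_choose_eq (K-1) (N-1)
  have h1 : K - 1 + 1 = K := by omega
  have h2 : N - 1 + 1 = N := by omega
  simp only [Nat.succ_eq_add_one, h1, h2] at h
  exact h

lemma choose_ratio2 (K N : ℕ) (hK : 2 ≤ K) (hN2 : 2 ≤ N) :
    (K-2).choose (N-2) * (K*(K-1)) = K.choose N * (N*(N-1)) := by
  have e2 : (K-1) * (K-2).choose (N-2) = (K-1).choose (N-1) * (N-1) := by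
    have h := Nat.add_one_mul_choose_eq (K-2) (N-2)
    have h1 : K - 2 + 1 = K - 1 := by omega
    have h2 : N - 2 + 1 = N - 1 := by omega
    simp only [Nat.succ_eq_add_one, h1, h2] at h
    exact h
  have e1 := choose_ratio1 K N (by omega) (by omega)
  calc (K-2).choose (N-2) * (K*(K-1)) = K*((K-1)*(K-2).choose (N-2)) := by ring
    _ = K*((K-1).choose (N-1)*(N-1)) := by rw [e2]
    _ = (K*(K-1).choose (N-1))*(N-1) := by ring
    _ = (K.choose N*N)*(N-1) := by rw [e1]
    _ = K.choose N*(N*(N-1)) := by ring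

section Exp
variable (K N : ℕ) (p : Fin K → ℝ)

lemma W0 : ∑ e : Fin K → Bool, (∏ j, if e j then p j else 1 - p j) = 1 := by
  simpa using bernoulli_moment p ∅

lemma W1 (k : Fin K) : ∑ e : Fin K → Bool,
    (∏ j, if e j then p j else 1 - p j) * (if e k then (1:ℝ) else 0) = p k := by
  simpa using bernoulli_moment p {k}

lemma W2 (k l : Fin K) (hkl : k ≠ l) : ∑ e : Fin K → Bool,
    (∏ j, if e j then p j else 1 - p j) *
      ((if e k then (1:ℝ) else 0) * (if e l then (1:ℝ) else 0)) = p k * p l := by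
  simpa [Finset.prod_pair hkl] using bernoulli_moment p {k, l}

lemma Ediag (hK : 2 ≤ K) (hN1 : 1 ≤ N) (hNK : N ≤ K) (k : Fin K) :
    (1/(K.choose N : ℝ)) * ∑ S ∈ Finset.powersetCard N (Finset.univ : Finset (Fin K)),
      ∑ e : Fin K → Bool, (∏ j, if e j then p j else 1 - p j) *
        (((if k ∈ S ∧ e k then (N:ℝ)⁻¹ else 0) - (K:ℝ)⁻¹) *
         ((if k ∈ S ∧ e k then (N:ℝ)⁻¹ else 0) - (K:ℝ)⁻¹))
    = p k/((N:ℝ)*(K:ℝ)) - 2*p k/(K:ℝ)^2 + 1/(K:ℝ)^2 := by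
  have hN0 : (N:ℝ) ≠ 0 := by positivity
  have hK0 : (K:ℝ) ≠ 0 := Nat.cast_ne_zero.mpr (by omega)
  have hC0 : (K.choose N : ℝ) ≠ 0 := Nat.cast_ne_zero.mpr (Nat.choose_pos hNK).ne'
  have key : ∀ (S : Finset (Fin K)) (e : Fin K → Bool),
      (∏ j, if e j then p j else 1 - p j) *
        (((if k ∈ S ∧ e k then (N:ℝ)⁻¹ else 0) - (K:ℝ)⁻¹) *
         ((if k ∈ S ∧ e k then (N:ℝ)⁻¹ else 0) - (K:ℝ)⁻¹))
      = ((if k ∈ S then (1:ℝ) else 0) * ((N:ℝ)⁻¹*(N:ℝ)⁻¹ - 2*(N:ℝ)⁻¹*(K:ℝ)⁻¹)) *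
          ((∏ j, if e j then p j else 1 - p j) * (if e k then (1:ℝ) else 0))
        + ((K:ℝ)⁻¹*(K:ℝ)⁻¹) * (∏ j, if e j then p j else 1 - p j) := by
    intro S e
    by_cases h1 : k ∈ S <;> by_cases h2 : e k <;> simp [h1, h2] <;> ring
  simp_rw [key, Finset.sum_add_distrib, ← Finset.mul_sum, W1 K p k, W0 K p]
  rw [Finset.sum_const, Finset.card_powersetCard, Finset.card_univ, Fintype.card_fin]
  simp_rw [mul_assoc]
  rw [← Finset.sum_mul, SX_count K N hN1 hNK k]
  have hr1 : ((K-1).choose (N-1) : ℝ) * K = (K.choose N : ℝ) * N := by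
    have := congrArg (Nat.cast : ℕ → ℝ) (choose_ratio1 K N (by omega) hN1)
    push_cast at this
    linarith
  have hcnt : ((K-1).choose (N-1) : ℝ) = (K.choose N : ℝ) * N / K := by
    field_simp
    linarith [hr1]
  rw [hcnt]
  simp only [nsmul_eq_mul, mul_one]
  field_simp

lemma SXX_ratio (hK : 2 ≤ K) (hN1 : 1 ≤ N) (hNK : N ≤ K) (k l : Fin K) (hkl : k ≠ l) :
    ∑ S ∈ Finset.powersetCard N (Finset.univ : Finset (Fin K)),
      ((if k ∈ S then (1:ℝ) else 0) * (if l ∈ S then (1:ℝ) else 0))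
    = (K.choose N : ℝ) * ((N:ℝ)*((N:ℝ)-1)) / ((K:ℝ)*((K:ℝ)-1)) := by
  have hK0 : (K:ℝ) ≠ 0 := Nat.cast_ne_zero.mpr (by omega)
  have hK1 : (K:ℝ) - 1 ≠ 0 := by
    have : (2:ℝ) ≤ K := by exact_mod_cast hK
    linarith
  rcases Nat.lt_or_ge N 2 with hN | hN
  · have hN1' : N = 1 := by omega
    subst hN1'
    rw [SXX_zero K k l hkl]
    simp
  · rw [SXX_count K N hN hNK k l hkl]
    have h := congrArg (Nat.cast : ℕ → ℝ) (choose_ratio2 K N hK hN)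
    push_cast [Nat.cast_sub (show 1 ≤ K by omega), Nat.cast_sub (show 1 ≤ N by omega)] at h
    field_simp
    linarith [h]

lemma Eoff (hK : 2 ≤ K) (hN1 : 1 ≤ N) (hNK : N ≤ K) (k l : Fin K) (hkl : k ≠ l) :
    (1/(K.choose N : ℝ)) * ∑ S ∈ Finset.powersetCard N (Finset.univ : Finset (Fin K)),
      ∑ e : Fin K → Bool, (∏ j, if e j then p j else 1 - p j) *
        (((if k ∈ S ∧ e k then (N:ℝ)⁻¹ else 0) - (K:ℝ)⁻¹) *
         ((if l ∈ S ∧ e l then (N:ℝ)⁻¹ else 0) - (K:ℝ)⁻¹))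
    = ((N:ℝ)-1)/((N:ℝ)*(K:ℝ)*((K:ℝ)-1)) * (p k * p l)
      - (p k + p l)/(K:ℝ)^2 + 1/(K:ℝ)^2 := by
  have hN0 : (N:ℝ) ≠ 0 := by positivity
  have hK0 : (K:ℝ) ≠ 0 := Nat.cast_ne_zero.mpr (by omega)
  have hK1 : (K:ℝ) - 1 ≠ 0 := by
    have : (2:ℝ) ≤ K := by exact_mod_cast hK
    linarith
  have hC0 : (K.choose N : ℝ) ≠ 0 := Nat.cast_ne_zero.mpr (Nat.choose_pos hNK).ne'
  have key : ∀ (S : Finset (Fin K)) (e : Fin K → Bool),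
      (∏ j, if e j then p j else 1 - p j) *
        (((if k ∈ S ∧ e k then (N:ℝ)⁻¹ else 0) - (K:ℝ)⁻¹) *
         ((if l ∈ S ∧ e l then (N:ℝ)⁻¹ else 0) - (K:ℝ)⁻¹))
      = ((if k ∈ S then (1:ℝ) else 0) * (if l ∈ S then (1:ℝ) else 0) * ((N:ℝ)⁻¹*(N:ℝ)⁻¹)) *
          ((∏ j, if e j then p j else 1 - p j) *
            ((if e k then (1:ℝ) else 0) * (if e l then (1:ℝ) else 0)))
        + (-((if k ∈ S then (1:ℝ) else 0) * ((N:ℝ)⁻¹*(K:ℝ)⁻¹))) *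
            ((∏ j, if e j then p j else 1 - p j) * (if e k then (1:ℝ) else 0))
        + (-((if l ∈ S then (1:ℝ) else 0) * ((N:ℝ)⁻¹*(K:ℝ)⁻¹))) *
            ((∏ j, if e j then p j else 1 - p j) * (if e l then (1:ℝ) else 0))
        + ((K:ℝ)⁻¹*(K:ℝ)⁻¹) * (∏ j, if e j then p j else 1 - p j) := by
    intro S e
    by_cases h1 : k ∈ S <;> by_cases h2 : e k <;> by_cases h3 : l ∈ S <;> by_cases h4 : e l <;>
      simp [h1, h2, h3, h4] <;> ring
  simp_rw [key, Finset.sum_add_distrib, ← Finset.mul_sum, W2 K p k l hkl, W1 K p k, W1 K p l,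
    W0 K p]
  rw [Finset.sum_const, Finset.card_powersetCard, Finset.card_univ, Fintype.card_fin]
  have e1 : ∑ x ∈ Finset.powersetCard N (Finset.univ : Finset (Fin K)),
      ((if k ∈ x then (1:ℝ) else 0) * if l ∈ x then (1:ℝ) else 0) * ((N:ℝ)⁻¹ * (N:ℝ)⁻¹) * (p k * p l)
      = (∑ x ∈ Finset.powersetCard N (Finset.univ : Finset (Fin K)),
          (if k ∈ x then (1:ℝ) else 0) * (if l ∈ x then (1:ℝ) else 0))
        * ((N:ℝ)⁻¹ * (N:ℝ)⁻¹ * (p k * p l)) := by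
    rw [Finset.sum_mul]
    exact Finset.sum_congr rfl fun x _ => by ring
  have e2 : ∑ x ∈ Finset.powersetCard N (Finset.univ : Finset (Fin K)),
      -((if k ∈ x then (1:ℝ) else 0) * ((N:ℝ)⁻¹ * (K:ℝ)⁻¹)) * p k
      = (∑ x ∈ Finset.powersetCard N (Finset.univ : Finset (Fin K)),
          (if k ∈ x then (1:ℝ) else 0)) * (-((N:ℝ)⁻¹ * (K:ℝ)⁻¹ * p k)) := by
    rw [Finset.sum_mul]
    exact Finset.sum_congr rfl fun x _ => by ring
  have e3 : ∑ x ∈ Finset.powersetCard N (Finset.univ : Finset (Fin K)),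
      -((if l ∈ x then (1:ℝ) else 0) * ((N:ℝ)⁻¹ * (K:ℝ)⁻¹)) * p l
      = (∑ x ∈ Finset.powersetCard N (Finset.univ : Finset (Fin K)),
          (if l ∈ x then (1:ℝ) else 0)) * (-((N:ℝ)⁻¹ * (K:ℝ)⁻¹ * p l)) := by
    rw [Finset.sum_mul]
    exact Finset.sum_congr rfl fun x _ => by ring
  rw [e1, e2, e3, SXX_ratio K N hK hN1 hNK k l hkl, SX_count K N hN1 hNK k,
    SX_count K N hN1 hNK l]
  have hr1 : ((K-1).choose (N-1) : ℝ) = (K.choose N : ℝ) * N / K := by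
    have := congrArg (Nat.cast : ℕ → ℝ) (choose_ratio1 K N (by omega) hN1)
    push_cast at this
    field_simp
    linarith
  rw [hr1]
  simp only [nsmul_eq_mul, mul_one]
  field_simp
  ring

end Exp

lemma swap4 {ι₁ ι₂ ι₃ ι₄ : Type*} (s₁ : Finset ι₁) (s₂ : Finset ι₂) (s₃ : Finset ι₃)
    (s₄ : Finset ι₄) (f : ι₁ → ι₂ → ι₃ → ι₄ → ℝ) (c : ℝ) :
    c * ∑ S ∈ s₁, ∑ e ∈ s₂, ∑ k ∈ s₃, ∑ l ∈ s₄, f S e k l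
    = ∑ k ∈ s₃, ∑ l ∈ s₄, c * ∑ S ∈ s₁, ∑ e ∈ s₂, f S e k l := by
  simp_rw [Finset.mul_sum]
  calc ∑ S ∈ s₁, ∑ e ∈ s₂, ∑ k ∈ s₃, ∑ l ∈ s₄, c * f S e k l
      = ∑ S ∈ s₁, ∑ k ∈ s₃, ∑ e ∈ s₂, ∑ l ∈ s₄, c * f S e k l :=
        Finset.sum_congr rfl fun S _ => Finset.sum_comm
    _ = ∑ k ∈ s₃, ∑ S ∈ s₁, ∑ e ∈ s₂, ∑ l ∈ s₄, c * f S e k l := Finset.sum_comm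
    _ = ∑ k ∈ s₃, ∑ S ∈ s₁, ∑ l ∈ s₄, ∑ e ∈ s₂, c * f S e k l :=
        Finset.sum_congr rfl fun k _ => Finset.sum_congr rfl fun S _ => Finset.sum_comm
    _ = ∑ k ∈ s₃, ∑ l ∈ s₄, ∑ S ∈ s₁, ∑ e ∈ s₂, c * f S e k l :=
        Finset.sum_congr rfl fun k _ => Finset.sum_comm

open RealInnerProductSpace

lemma norm_sum_smul_sq {V : Type*} [NormedAddCommGroup V] [InnerProductSpace ℝ V]
    {K : ℕ} (a : Fin K → ℝ) (d : Fin K → V) :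
    ‖∑ k, a k • d k‖^2 = ∑ k, ∑ l, a k * a l * ⟪d k, d l⟫ := by
  rw [← real_inner_self_eq_norm_sq, sum_inner]
  refine Finset.sum_congr rfl fun k _ => ?_
  rw [inner_sum]
  refine Finset.sum_congr rfl fun l _ => ?_
  rw [real_inner_smul_left, real_inner_smul_right]
  ring

lemma gomore_vec {V : Type*} [NormedAddCommGroup V] [InnerProductSpace ℝ V]
    (K N : ℕ) (hK : 1 ≤ K) (hN1 : 1 ≤ N)
    (w : V) (ws : Fin K → V) (S : Finset (Fin K)) (hS : S.card = N) (e : Fin K → Bool) :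
    (1 / (N : ℝ)) • (∑ k ∈ S, (if e k then ws k else w)) -
      (1 / (K : ℝ)) • (∑ k, ws k)
    = ∑ k, ((if k ∈ S ∧ e k then (N:ℝ)⁻¹ else 0) - (K:ℝ)⁻¹) • (ws k - w) := by
  have hN0 : (N:ℝ) ≠ 0 := by positivity
  have hK0 : (K:ℝ) ≠ 0 := by
    have : 0 < K := by omega
    positivity
  have h1 : ∑ k ∈ S, (if e k then ws k else w)
      = (∑ k ∈ S, (if e k then ws k - w else 0)) + N • w := by
    rw [← hS, ← Finset.sum_const, ← Finset.sum_add_distrib]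
    refine Finset.sum_congr rfl fun k _ => ?_
    by_cases h : e k <;> simp [h]
  have h2 : ∑ k, ws k = (∑ k, (ws k - w)) + K • w := by
    have : ∑ k : Fin K, (ws k - w) = ∑ k, ws k - K • w := by
      rw [Finset.sum_sub_distrib]
      simp
    rw [this]; abel
  rw [h1, h2, smul_add, smul_add]
  rw [show (1/(N:ℝ)) • (N • w) = w by
    rw [← Nat.cast_smul_eq_nsmul ℝ, smul_smul]; field_simp; exact one_smul _ _]
  rw [show (1/(K:ℝ)) • (K • w) = w by
    rw [← Nat.cast_smul_eq_nsmul ℝ, smul_smul]; field_simp; exact one_smul _ _]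
  rw [show ∑ k ∈ S, (if e k then ws k - w else 0)
      = ∑ k, (if k ∈ S then (if e k then ws k - w else 0) else 0) by
    rw [Finset.sum_ite_mem, Finset.univ_inter]]
  rw [Finset.smul_sum, Finset.smul_sum]
  rw [show ∀ A B : V, A + w - (B + w) = A - B from fun A B => by abel]
  rw [← Finset.sum_sub_distrib]
  refine Finset.sum_congr rfl fun k _ => ?_
  rw [sub_smul]
  by_cases h1 : k ∈ S <;> by_cases h2 : e k <;> simp [h1, h2, one_div]


set_option maxHeartbeats 1600000 in
/-- GoMORE expected squared weight divergence bound (Lemma 1).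
`e : Fin K → Bool` encodes the error pattern (`true` = error-free), with weight
`∏ k, p k ^ e k * (1 - p k) ^ (1 - e k)` written via `if`. -/
theorem gomore_weight_divergence_bound
    {V : Type*} [NormedAddCommGroup V] [InnerProductSpace ℝ V]
    (K N : ℕ) (hK : 2 ≤ K) (hN1 : 1 ≤ N) (hNK : N ≤ K)
    (w : V) (ws : Fin K → V) (p : Fin K → ℝ)
    (hp : ∀ k, 0 ≤ p k ∧ p k ≤ 1)
    (c : ℝ) (hc : 0 ≤ c) (hbound : ∀ k, ‖ws k - w‖ ≤ c) :
    (1 / (Nat.choose K N : ℝ)) *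
      ∑ S ∈ Finset.powersetCard N (Finset.univ : Finset (Fin K)),
        ∑ e : Fin K → Bool,
          (∏ k, if e k then p k else 1 - p k) *
            ‖(1 / (N : ℝ)) • (∑ k ∈ S, (if e k then ws k else w)) -
              (1 / (K : ℝ)) • (∑ k, ws k)‖ ^ 2
    ≤ ∑ k, (c ^ 2 / (K : ℝ)) *
        (((K : ℝ) - N) / ((N : ℝ) * ((K : ℝ) - 1)) * (p k) ^ 2 - p k + 1) := by
  have hN0 : (N:ℝ) ≠ 0 := by positivity
  have hK0 : (K:ℝ) ≠ 0 := Nat.cast_ne_zero.mpr (by omega)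
  have hK2 : (2:ℝ) ≤ (K:ℝ) := by exact_mod_cast hK
  have hN1' : (1:ℝ) ≤ (N:ℝ) := by exact_mod_cast hN1
  have hNK' : (N:ℝ) ≤ (K:ℝ) := by exact_mod_cast hNK
  have hK1 : (K:ℝ) - 1 ≠ 0 := by linarith
  -- Step 1: expectation computation
  have step1 :
      (1 / (Nat.choose K N : ℝ)) *
        ∑ S ∈ Finset.powersetCard N (Finset.univ : Finset (Fin K)),
          ∑ e : Fin K → Bool,
            (∏ k, if e k then p k else 1 - p k) *
              ‖(1 / (N : ℝ)) • (∑ k ∈ S, (if e k then ws k else w)) -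
                (1 / (K : ℝ)) • (∑ k, ws k)‖ ^ 2
      = ∑ k, ∑ l, (if k = l then (p k/((N:ℝ)*(K:ℝ)) - 2*p k/(K:ℝ)^2 + 1/(K:ℝ)^2)
          else (((N:ℝ)-1)/((N:ℝ)*(K:ℝ)*((K:ℝ)-1)) * (p k * p l)
            - (p k + p l)/(K:ℝ)^2 + 1/(K:ℝ)^2))
          * ⟪ws k - w, ws l - w⟫ := by
    have h1 : ∀ S ∈ Finset.powersetCard N (Finset.univ : Finset (Fin K)),
        ∑ e : Fin K → Bool, (∏ k, if e k then p k else 1 - p k) *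
            ‖(1 / (N : ℝ)) • (∑ k ∈ S, (if e k then ws k else w)) -
              (1 / (K : ℝ)) • (∑ k, ws k)‖ ^ 2
        = ∑ e : Fin K → Bool, ∑ k, ∑ l,
            ((∏ j, if e j then p j else 1 - p j) *
              (((if k ∈ S ∧ e k then (N:ℝ)⁻¹ else 0) - (K:ℝ)⁻¹) *
               ((if l ∈ S ∧ e l then (N:ℝ)⁻¹ else 0) - (K:ℝ)⁻¹))) *
              ⟪ws k - w, ws l - w⟫ := by
      intro S hS
      refine Finset.sum_congr rfl fun e _ => ?_
      rw [Finset.mem_powersetCard] at hS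
      rw [gomore_vec K N (by omega) hN1 w ws S hS.2 e, norm_sum_smul_sq]
      rw [Finset.mul_sum]
      refine Finset.sum_congr rfl fun k _ => ?_
      rw [Finset.mul_sum]
      refine Finset.sum_congr rfl fun l _ => ?_
      ring
    rw [Finset.sum_congr rfl h1, swap4]
    refine Finset.sum_congr rfl fun k _ => Finset.sum_congr rfl fun l _ => ?_
    have hfact : ∑ S ∈ Finset.powersetCard N (Finset.univ : Finset (Fin K)),
        ∑ e : Fin K → Bool,
          ((∏ j, if e j then p j else 1 - p j) *
            (((if k ∈ S ∧ e k then (N:ℝ)⁻¹ else 0) - (K:ℝ)⁻¹) *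
             ((if l ∈ S ∧ e l then (N:ℝ)⁻¹ else 0) - (K:ℝ)⁻¹))) *
            ⟪ws k - w, ws l - w⟫
        = (∑ S ∈ Finset.powersetCard N (Finset.univ : Finset (Fin K)),
            ∑ e : Fin K → Bool,
              (∏ j, if e j then p j else 1 - p j) *
                (((if k ∈ S ∧ e k then (N:ℝ)⁻¹ else 0) - (K:ℝ)⁻¹) *
                 ((if l ∈ S ∧ e l then (N:ℝ)⁻¹ else 0) - (K:ℝ)⁻¹)))
            * ⟪ws k - w, ws l - w⟫ := by
      rw [Finset.sum_mul]
      exact Finset.sum_congr rfl fun S _ => by rw [Finset.sum_mul]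
    rw [hfact, ← mul_assoc]
    by_cases hkl : k = l
    · subst hkl
      simp only [if_pos rfl]
      exact congrArg (· * ⟪ws k - w, ws k - w⟫) (Ediag K N p hK hN1 hNK k)
    · simp only [if_neg hkl]
      exact congrArg (· * ⟪ws k - w, ws l - w⟫) (Eoff K N p hK hN1 hNK k l hkl)
  -- Step 2: quadratic form identity
  have step2 : ∑ k, ∑ l, (if k = l then (p k/((N:ℝ)*(K:ℝ)) - 2*p k/(K:ℝ)^2 + 1/(K:ℝ)^2)
          else (((N:ℝ)-1)/((N:ℝ)*(K:ℝ)*((K:ℝ)-1)) * (p k * p l)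
            - (p k + p l)/(K:ℝ)^2 + 1/(K:ℝ)^2))
          * ⟪ws k - w, ws l - w⟫
      = (∑ k, (p k/((N:ℝ)*(K:ℝ)) - p k^2/(K:ℝ)^2
            + ((K:ℝ)-(N:ℝ))/((N:ℝ)*(K:ℝ)^2*((K:ℝ)-1)) * p k^2) * ‖ws k - w‖^2)
        - ((K:ℝ)-(N:ℝ))/((N:ℝ)*(K:ℝ)^2*((K:ℝ)-1)) * ‖∑ k, p k • (ws k - w)‖^2
        + ‖∑ k, ((1 - p k)/(K:ℝ)) • (ws k - w)‖^2 := by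
    rw [norm_sum_smul_sq p (fun k => ws k - w),
      norm_sum_smul_sq (fun k => (1 - p k)/(K:ℝ)) (fun k => ws k - w)]
    have hA : ∑ k, (p k/((N:ℝ)*(K:ℝ)) - p k^2/(K:ℝ)^2
            + ((K:ℝ)-(N:ℝ))/((N:ℝ)*(K:ℝ)^2*((K:ℝ)-1)) * p k^2) * ‖ws k - w‖^2
        = ∑ k, ∑ l, (if k = l then (p k/((N:ℝ)*(K:ℝ)) - p k^2/(K:ℝ)^2
            + ((K:ℝ)-(N:ℝ))/((N:ℝ)*(K:ℝ)^2*((K:ℝ)-1)) * p k^2)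
              * ⟪ws k - w, ws l - w⟫ else 0) := by
      refine Finset.sum_congr rfl fun k _ => ?_
      rw [Finset.sum_ite_eq, if_pos (Finset.mem_univ k), real_inner_self_eq_norm_sq]
    rw [hA, Finset.mul_sum, ← Finset.sum_sub_distrib, ← Finset.sum_add_distrib]
    refine Finset.sum_congr rfl fun k _ => ?_
    rw [Finset.mul_sum, ← Finset.sum_sub_distrib, ← Finset.sum_add_distrib]
    refine Finset.sum_congr rfl fun l _ => ?_
    by_cases hkl : k = l
    · subst hkl
      simp only [if_pos rfl, if_true, eq_self_iff_true]
      field_simp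
      ring
    · simp only [if_neg hkl]
      field_simp
      ring
  -- Step 3: bounds
  rw [step1, step2]
  have hdsq : ∀ k, ‖ws k - w‖^2 ≤ c^2 := fun k => pow_le_pow_left₀ (norm_nonneg _) (hbound k) 2
  have hγ : 0 ≤ ((K:ℝ)-(N:ℝ))/((N:ℝ)*(K:ℝ)^2*((K:ℝ)-1)) := by
    apply div_nonneg (by linarith)
    apply mul_nonneg (by positivity) (by linarith)
  have coeff_nonneg : ∀ k, 0 ≤ p k/((N:ℝ)*(K:ℝ)) - p k^2/(K:ℝ)^2
      + ((K:ℝ)-(N:ℝ))/((N:ℝ)*(K:ℝ)^2*((K:ℝ)-1)) * p k^2 := by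
    intro k
    obtain ⟨hp0, hp1⟩ := hp k
    have h1 : p k/((N:ℝ)*(K:ℝ)) - p k^2/(K:ℝ)^2
        = (p k * ((K:ℝ) - (N:ℝ) * p k))/((N:ℝ)*(K:ℝ)^2) := by
      field_simp
    have h2 : 0 ≤ (p k * ((K:ℝ) - (N:ℝ) * p k))/((N:ℝ)*(K:ℝ)^2) := by
      apply div_nonneg (mul_nonneg hp0 (by nlinarith)) (by positivity)
    have h3 : 0 ≤ ((K:ℝ)-(N:ℝ))/((N:ℝ)*(K:ℝ)^2*((K:ℝ)-1)) * p k^2 :=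
      mul_nonneg hγ (sq_nonneg _)
    linarith
  have boundA : ∑ k, (p k/((N:ℝ)*(K:ℝ)) - p k^2/(K:ℝ)^2
        + ((K:ℝ)-(N:ℝ))/((N:ℝ)*(K:ℝ)^2*((K:ℝ)-1)) * p k^2) * ‖ws k - w‖^2
      ≤ ∑ k, (p k/((N:ℝ)*(K:ℝ)) - p k^2/(K:ℝ)^2
        + ((K:ℝ)-(N:ℝ))/((N:ℝ)*(K:ℝ)^2*((K:ℝ)-1)) * p k^2) * c^2 :=
    Finset.sum_le_sum fun k _ => mul_le_mul_of_nonneg_left (hdsq k) (coeff_nonneg k)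
  have boundB : 0 ≤ ((K:ℝ)-(N:ℝ))/((N:ℝ)*(K:ℝ)^2*((K:ℝ)-1))
      * ‖∑ k, p k • (ws k - w)‖^2 := mul_nonneg hγ (sq_nonneg _)
  have hq : ∀ k, 0 ≤ (1 - p k)/(K:ℝ) := fun k =>
    div_nonneg (by linarith [(hp k).2]) (by positivity)
  have boundC : ‖∑ k, ((1 - p k)/(K:ℝ)) • (ws k - w)‖^2
      ≤ ((K:ℝ) * ∑ k, ((1 - p k)/(K:ℝ))^2) * c^2 := by
    have h1 : ‖∑ k, ((1 - p k)/(K:ℝ)) • (ws k - w)‖ ≤ ∑ k, ((1 - p k)/(K:ℝ)) * c := by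
      calc ‖∑ k, ((1 - p k)/(K:ℝ)) • (ws k - w)‖
          ≤ ∑ k, ‖((1 - p k)/(K:ℝ)) • (ws k - w)‖ := norm_sum_le _ _
        _ = ∑ k, ((1 - p k)/(K:ℝ)) * ‖ws k - w‖ := by
            refine Finset.sum_congr rfl fun k _ => ?_
            rw [norm_smul, Real.norm_of_nonneg (hq k)]
        _ ≤ ∑ k, ((1 - p k)/(K:ℝ)) * c :=
            Finset.sum_le_sum fun k _ => mul_le_mul_of_nonneg_left (hbound k) (hq k)
    have h4 : (∑ k, (1 - p k)/(K:ℝ))^2 ≤ (K:ℝ) * ∑ k, ((1 - p k)/(K:ℝ))^2 := by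
      have := sq_sum_le_card_mul_sum_sq (s := (Finset.univ : Finset (Fin K)))
        (f := fun k => (1 - p k)/(K:ℝ))
      simpa using this
    calc ‖∑ k, ((1 - p k)/(K:ℝ)) • (ws k - w)‖^2
        ≤ (∑ k, ((1 - p k)/(K:ℝ)) * c)^2 := pow_le_pow_left₀ (norm_nonneg _) h1 2
      _ = (∑ k, (1 - p k)/(K:ℝ))^2 * c^2 := by rw [← Finset.sum_mul, mul_pow]
      _ ≤ ((K:ℝ) * ∑ k, ((1 - p k)/(K:ℝ))^2) * c^2 :=
          mul_le_mul_of_nonneg_right h4 (sq_nonneg c)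
  have final : (∑ k, (p k/((N:ℝ)*(K:ℝ)) - p k^2/(K:ℝ)^2
        + ((K:ℝ)-(N:ℝ))/((N:ℝ)*(K:ℝ)^2*((K:ℝ)-1)) * p k^2) * c^2)
      + ((K:ℝ) * ∑ k, ((1 - p k)/(K:ℝ))^2) * c^2
      ≤ ∑ k, (c ^ 2 / (K : ℝ)) *
        (((K : ℝ) - N) / ((N : ℝ) * ((K : ℝ) - 1)) * (p k) ^ 2 - p k + 1) := by
    rw [Finset.mul_sum, Finset.sum_mul, ← Finset.sum_add_distrib]
    refine Finset.sum_le_sum fun k _ => ?_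
    obtain ⟨hp0, hp1⟩ := hp k
    have hdiff : (c^2/(K:ℝ))*(((K:ℝ)-N)/((N:ℝ)*((K:ℝ)-1))*p k^2 - p k + 1)
        - ((p k/((N:ℝ)*(K:ℝ)) - p k^2/(K:ℝ)^2
            + ((K:ℝ)-(N:ℝ))/((N:ℝ)*(K:ℝ)^2*((K:ℝ)-1)) * p k^2) * c^2
          + (K:ℝ)*((1 - p k)/(K:ℝ))^2*c^2)
        = c^2*((N:ℝ)-1)*(p k - p k^2)/((N:ℝ)*(K:ℝ)) := by
      field_simp
      ring
    have hpos : 0 ≤ c^2*((N:ℝ)-1)*(p k - p k^2)/((N:ℝ)*(K:ℝ)) := by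
      apply div_nonneg _ (by positivity)
      exact mul_nonneg (mul_nonneg (sq_nonneg c) (by linarith)) (by nlinarith)
    linarith
  linarith [boundA, boundB, boundC, final]
end

section
/- Under the DDS aggregation, the expected squared weight divergence satisfies E[‖w̃(S,e) − w*‖²] ≤ Σ_{k=1}^K ( c²·(K−N)/(K·N·(K−1)) + ((1−p_k)/(K·p_k))·G² ), provided ‖w_k − w‖ ≤ c and ‖w_k‖ ≤ G for every k = 1, …, K. -/
open Finset RealInnerProductSpace

section Aux

lemma sum_pi_bool_prod {K : ℕ} (q : Fin K → Bool → ℝ) :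
    ∑ e : Fin K → Bool, ∏ k, q k (e k) = ∏ k, (q k true + q k false) := by
  rw [← Fintype.prod_sum (fun (k : Fin K) (b : Bool) => q k b)]
  exact Finset.prod_congr rfl fun k _ => by rw [Fintype.sum_bool]

lemma exp_mass {K : ℕ} (p : Fin K → ℝ) :
    ∑ e : Fin K → Bool, (∏ k, if e k then p k else 1 - p k) = 1 := by
  rw [sum_pi_bool_prod (fun k b => if b then p k else 1 - p k)]
  simp

lemma exp_one {K : ℕ} (p : Fin K → ℝ) (j : Fin K) (g : Bool → ℝ) :
    ∑ e : Fin K → Bool, (∏ k, if e k then p k else 1 - p k) * g (e j)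
      = p j * g true + (1 - p j) * g false := by
  have h1 : ∀ e : Fin K → Bool,
      (∏ k, if e k then p k else 1 - p k) * g (e j)
        = ∏ k, ((if e k then p k else 1 - p k) * (if k = j then g (e k) else 1)) := by
    intro e
    rw [Finset.prod_mul_distrib, Finset.prod_ite_eq' Finset.univ j (fun k => g (e k))]
    simp
  simp only [h1]
  rw [sum_pi_bool_prod (fun k b => (if b then p k else 1 - p k) * (if k = j then g b else 1))]
  have h2 : ∀ k : Fin K,
      ((if (true:Bool) then p k else 1 - p k) * (if k = j then g true else 1)
        + (if (false:Bool) then p k else 1 - p k) * (if k = j then g false else 1))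
      = if k = j then (p j * g true + (1 - p j) * g false) else 1 := by
    intro k
    by_cases h : k = j <;> simp [h]
  rw [Finset.prod_congr rfl (fun k _ => h2 k), Finset.prod_ite_eq' Finset.univ j
    (fun _ => (p j * g true + (1 - p j) * g false))]
  simp

lemma exp_two {K : ℕ} (p : Fin K → ℝ) {j l : Fin K} (hjl : j ≠ l) (g h : Bool → ℝ) :
    ∑ e : Fin K → Bool, (∏ k, if e k then p k else 1 - p k) * g (e j) * h (e l)
      = (p j * g true + (1 - p j) * g false) * (p l * h true + (1 - p l) * h false) := by
  have h1 : ∀ e : Fin K → Bool,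
      (∏ k, if e k then p k else 1 - p k) * g (e j) * h (e l)
        = ∏ k, ((if e k then p k else 1 - p k) * (if k = j then g (e k) else 1)
            * (if k = l then h (e k) else 1)) := by
    intro e
    rw [Finset.prod_mul_distrib, Finset.prod_mul_distrib,
      Finset.prod_ite_eq' Finset.univ j (fun k => g (e k)),
      Finset.prod_ite_eq' Finset.univ l (fun k => h (e k))]
    simp
  simp only [h1]
  rw [sum_pi_bool_prod (fun k b => (if b then p k else 1 - p k) * (if k = j then g b else 1)
    * (if k = l then h b else 1))]
  have h2 : ∀ k : Fin K,
      ((if (true:Bool) then p k else 1 - p k) * (if k = j then g true else 1)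
          * (if k = l then h true else 1)
        + (if (false:Bool) then p k else 1 - p k) * (if k = j then g false else 1)
          * (if k = l then h false else 1))
      = (if k = j then (p j * g true + (1 - p j) * g false) else 1)
          * (if k = l then (p l * h true + (1 - p l) * h false) else 1) := by
    intro k
    by_cases hj : k = j
    · subst hj; simp [hjl]
    · by_cases hl : k = l
      · subst hl; simp [hj, Ne.symm hjl]
      · simp [hj, hl]
  rw [Finset.prod_congr rfl (fun k _ => h2 k), Finset.prod_mul_distrib,
    Finset.prod_ite_eq' Finset.univ j (fun _ => (p j * g true + (1 - p j) * g false)),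
    Finset.prod_ite_eq' Finset.univ l (fun _ => (p l * h true + (1 - p l) * h false))]
  simp

lemma count_one {K N : ℕ} (hN1 : 1 ≤ N) (j : Fin K) :
    (((Finset.univ : Finset (Fin K)).powersetCard N).filter (fun S => j ∈ S)).card
      = (K - 1).choose (N - 1) := by
  have hi : ∀ S ∈ ((univ : Finset (Fin K)).powersetCard N).filter (fun S => j ∈ S),
      S.erase j ∈ (univ.erase j).powersetCard (N - 1) := by
    intro S hS
    simp only [mem_filter, mem_powersetCard] at hS
    rw [mem_powersetCard]
    exact ⟨erase_subset_erase j hS.1.1, by rw [card_erase_of_mem hS.2, hS.1.2]⟩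
  have hj : ∀ T ∈ (univ.erase j).powersetCard (N - 1),
      insert j T ∈ ((univ : Finset (Fin K)).powersetCard N).filter (fun S => j ∈ S) := by
    intro T hT
    rw [mem_powersetCard] at hT
    have hjT : j ∉ T := fun h => by have := hT.1 h; simp at this
    rw [mem_filter, mem_powersetCard]
    refine ⟨⟨subset_univ _, ?_⟩, mem_insert_self _ _⟩
    rw [card_insert_of_notMem hjT, hT.2]
    omega
  have h : (((univ : Finset (Fin K)).powersetCard N).filter (fun S => j ∈ S)).card
      = ((univ.erase j).powersetCard (N - 1)).card := by
    refine Finset.card_bij' (fun S _ => S.erase j) (fun T _ => insert j T) hi hj ?_ ?_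
    · intro S hS; simp only [mem_filter] at hS; exact insert_erase hS.2
    · intro T hT
      have hjT : j ∉ T := fun h => by
        have := (mem_powersetCard.mp hT).1 h; simp at this
      exact erase_insert hjT
  rw [h, card_powersetCard, card_erase_of_mem (mem_univ j), card_univ, Fintype.card_fin]

lemma choose_id1 {K N : ℕ} (hN1 : 1 ≤ N) (hNK : N ≤ K) :
    K * (K - 1).choose (N - 1) = K.choose N * N := by
  have h1 := Nat.add_one_mul_choose_eq (K - 1) (N - 1)
  rw [show K - 1 + 1 = K by omega, show N - 1 + 1 = N by omega] at h1
  exact h1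

lemma count_two {K N : ℕ} (hK : 2 ≤ K) (hN1 : 1 ≤ N) (hNK : N ≤ K) {j l : Fin K} (hjl : j ≠ l) :
    (((Finset.univ : Finset (Fin K)).powersetCard N).filter (fun S => j ∈ S ∧ l ∈ S)).card
        * (K * (K - 1))
      = K.choose N * (N * (N - 1)) := by
  rcases Nat.lt_or_ge N 2 with hN2 | hN2
  · interval_cases N
    have h0 : (((univ : Finset (Fin K)).powersetCard 1).filter (fun S => j ∈ S ∧ l ∈ S)) = ∅ := by
      apply Finset.filter_false_of_mem
      intro S hS
      rw [mem_powersetCard] at hS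
      rintro ⟨hjS, hlS⟩
      have hsub : ({j, l} : Finset (Fin K)) ⊆ S := by
        intro x hx; simp at hx; rcases hx with rfl | rfl <;> assumption
      have := Finset.card_le_card hsub
      rw [Finset.card_pair hjl, hS.2] at this
      omega
    simp [h0]
  · have hcard : (((univ : Finset (Fin K)).powersetCard N).filter
          (fun S => j ∈ S ∧ l ∈ S)).card
        = (((univ.erase j).erase l).powersetCard (N - 2)).card := by
      have hi : ∀ S ∈ ((univ : Finset (Fin K)).powersetCard N).filter
            (fun S => j ∈ S ∧ l ∈ S),
          (S.erase j).erase l ∈ ((univ.erase j).erase l).powersetCard (N - 2) := by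
        intro S hS
        simp only [mem_filter, mem_powersetCard] at hS
        rw [mem_powersetCard]
        refine ⟨erase_subset_erase l (erase_subset_erase j hS.1.1), ?_⟩
        rw [card_erase_of_mem (mem_erase.mpr ⟨Ne.symm hjl, hS.2.2⟩),
          card_erase_of_mem hS.2.1, hS.1.2]
        omega
      have hj : ∀ T ∈ ((univ.erase j).erase l).powersetCard (N - 2),
          insert j (insert l T) ∈ ((univ : Finset (Fin K)).powersetCard N).filter
            (fun S => j ∈ S ∧ l ∈ S) := by
        intro T hT
        rw [mem_powersetCard] at hT
        have hlT : l ∉ T := fun h => by have := hT.1 h; simp at this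
        have hjT : j ∉ T := fun h => by have := hT.1 h; simp at this
        have hjlT : j ∉ insert l T := by
          simp only [mem_insert]
          rintro (rfl | h)
          · exact hjl rfl
          · exact hjT h
        rw [mem_filter, mem_powersetCard]
        refine ⟨⟨subset_univ _, ?_⟩, mem_insert_self _ _,
          mem_insert_of_mem (mem_insert_self _ _)⟩
        rw [card_insert_of_notMem hjlT, card_insert_of_notMem hlT, hT.2]
        omega
      refine Finset.card_bij' (fun S _ => (S.erase j).erase l)
        (fun T _ => insert j (insert l T)) hi hj ?_ ?_
      · intro S hS
        simp only [mem_filter] at hS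
        show insert j (insert l ((S.erase j).erase l)) = S
        rw [insert_erase (mem_erase.mpr ⟨Ne.symm hjl, hS.2.2⟩), insert_erase hS.2.1]
      · intro T hT
        rw [mem_powersetCard] at hT
        have hlT : l ∉ T := fun h => by have := hT.1 h; simp at this
        have hjT : j ∉ T := fun h => by have := hT.1 h; simp at this
        have hjlT : j ∉ insert l T := by
          simp only [mem_insert]
          rintro (rfl | h)
          · exact hjl rfl
          · exact hjT h
        show ((insert j (insert l T)).erase j).erase l = T
        rw [erase_insert hjlT, erase_insert hlT]
    rw [hcard, card_powersetCard,
      card_erase_of_mem (mem_erase.mpr ⟨Ne.symm hjl, mem_univ l⟩),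
      card_erase_of_mem (mem_univ j), card_univ, Fintype.card_fin]
    have id1 : K * (K - 1).choose (N - 1) = K.choose N * N := choose_id1 hN1 hNK
    have id2 : (K - 1) * (K - 2).choose (N - 2) = (K - 1).choose (N - 1) * (N - 1) := by
      have h1 := Nat.add_one_mul_choose_eq (K - 2) (N - 2)
      rw [show K - 2 + 1 = K - 1 by omega, show N - 2 + 1 = N - 1 by omega] at h1
      exact h1
    have e3 : K - 1 - 1 = K - 2 := by omega
    rw [e3]
    calc (K - 2).choose (N - 2) * (K * (K - 1))
        = K * ((K - 1) * (K - 2).choose (N - 2)) := by ring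
      _ = K * ((K - 1).choose (N - 1) * (N - 1)) := by rw [id2]
      _ = (K * (K - 1).choose (N - 1)) * (N - 1) := by ring
      _ = K.choose N * N * (N - 1) := by rw [id1]
      _ = K.choose N * (N * (N - 1)) := by ring

lemma sum_over_sets_single {α : Type*} [Fintype α] [DecidableEq α]
    (𝒮 : Finset (Finset α)) (f : α → ℝ) :
    ∑ S ∈ 𝒮, ∑ k ∈ S, f k
      = ∑ k, ((𝒮.filter (fun S => k ∈ S)).card : ℝ) * f k := by
  have h1 : ∀ S ∈ 𝒮, ∑ k ∈ S, f k = ∑ k : α, if k ∈ S then f k else 0 := by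
    intro S _
    rw [Finset.sum_ite_mem, univ_inter]
  rw [Finset.sum_congr rfl h1, Finset.sum_comm]
  refine Finset.sum_congr rfl fun k _ => ?_
  rw [← Finset.sum_filter, Finset.sum_const, nsmul_eq_mul]

lemma sum_over_sets_double {α : Type*} [Fintype α] [DecidableEq α]
    (𝒮 : Finset (Finset α)) (f : α → α → ℝ) :
    ∑ S ∈ 𝒮, ∑ j ∈ S, ∑ k ∈ S, f j k
      = ∑ j, ∑ k, ((𝒮.filter (fun S => j ∈ S ∧ k ∈ S)).card : ℝ) * f j k := by
  have h1 : ∀ S ∈ 𝒮, ∑ j ∈ S, ∑ k ∈ S, f j k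
      = ∑ j : α, ∑ k : α, if j ∈ S ∧ k ∈ S then f j k else 0 := by
    intro S _
    calc ∑ j ∈ S, ∑ k ∈ S, f j k
        = ∑ j ∈ S, ∑ k : α, if k ∈ S then f j k else 0 :=
          Finset.sum_congr rfl fun j _ => by rw [Finset.sum_ite_mem, univ_inter]
      _ = ∑ j : α, if j ∈ S then (∑ k : α, if k ∈ S then f j k else 0) else 0 := by
          rw [Finset.sum_ite_mem, univ_inter]
      _ = ∑ j : α, ∑ k : α, if j ∈ S ∧ k ∈ S then f j k else 0 := by
          refine Finset.sum_congr rfl fun j _ => ?_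
          by_cases hj : j ∈ S
          · simp [hj]
          · simp [hj]
  rw [Finset.sum_congr rfl h1, Finset.sum_comm]
  refine Finset.sum_congr rfl fun j _ => ?_
  rw [Finset.sum_comm]
  refine Finset.sum_congr rfl fun k _ => ?_
  rw [← Finset.sum_filter, Finset.sum_const, nsmul_eq_mul]

variable {V : Type*} [NormedAddCommGroup V] [InnerProductSpace ℝ V]

lemma inner_sum_sum {ι : Type*} (s : Finset ι) (a : ι → ℝ) (u : ι → V) :
    ⟪∑ j ∈ s, a j • u j, ∑ k ∈ s, a k • u k⟫
      = ∑ j ∈ s, ∑ k ∈ s, a j * a k * ⟪u j, u k⟫ := by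
  rw [sum_inner]
  refine Finset.sum_congr rfl fun j _ => ?_
  rw [inner_sum]
  refine Finset.sum_congr rfl fun k _ => ?_
  rw [real_inner_smul_left, real_inner_smul_right]
  ring

lemma norm_sq_smul_sum {ι : Type*} (r : ℝ) (s : Finset ι) (a : ι → ℝ) (u : ι → V) :
    ‖r • ∑ k ∈ s, a k • u k‖ ^ 2
      = r ^ 2 * ∑ j ∈ s, ∑ k ∈ s, a j * a k * ⟪u j, u k⟫ := by
  rw [← real_inner_self_eq_norm_sq, real_inner_smul_left, real_inner_smul_right,
    inner_sum_sum]
  ring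

/-- centered selection weight -/
noncomputable def bf {K : ℕ} (p : Fin K → ℝ) (k : Fin K) (b : Bool) : ℝ :=
  if b then 1 / p k - 1 else -1

lemma perS {K N : ℕ} (ws : Fin K → V) (p : Fin K → ℝ)
    (hp : ∀ k, 0 < p k ∧ p k ≤ 1) (S : Finset (Fin K)) :
    ∑ e : Fin K → Bool,
        (∏ k, if e k then p k else 1 - p k) *
          ‖(1 / (N : ℝ)) • (∑ k ∈ S, (if e k then (1 / p k) • ws k else 0)) -
            (1 / (K : ℝ)) • (∑ k, ws k)‖ ^ 2
      = ‖(1 / (N : ℝ)) • (∑ k ∈ S, ws k) - (1 / (K : ℝ)) • (∑ k, ws k)‖ ^ 2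
        + (1 / (N : ℝ)) ^ 2 * ∑ k ∈ S, ((1 - p k) / p k) * ‖ws k‖ ^ 2 := by
  set A : V := (1 / (N : ℝ)) • (∑ k ∈ S, ws k) - (1 / (K : ℝ)) • (∑ k, ws k) with hA
  set P : (Fin K → Bool) → ℝ := fun e => ∏ k, if e k then p k else 1 - p k with hP
  have hX : ∀ e : Fin K → Bool,
      (1 / (N : ℝ)) • (∑ k ∈ S, (if e k then (1 / p k) • ws k else 0)) -
          (1 / (K : ℝ)) • (∑ k, ws k)
        = A + (1 / (N : ℝ)) • ∑ k ∈ S, bf p k (e k) • ws k := by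
    intro e
    have h1 : ∀ k ∈ S, (if e k then (1 / p k) • ws k else 0)
        = ws k + bf p k (e k) • ws k := by
      intro k _
      cases hek : e k
      · simp [bf]
      · simp only [bf, if_true, hek]
        rw [sub_smul, one_smul, one_div]
        abel
    rw [Finset.sum_congr rfl h1, Finset.sum_add_distrib, smul_add, hA]
    abel
  have expand : ∀ e : Fin K → Bool,
      P e * ‖A + (1 / (N : ℝ)) • ∑ k ∈ S, bf p k (e k) • ws k‖ ^ 2
        = P e * ‖A‖ ^ 2
          + ∑ k ∈ S, (P e * bf p k (e k)) * ((2 / (N : ℝ)) * ⟪A, ws k⟫)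
          + ∑ j ∈ S, ∑ k ∈ S,
              (P e * bf p j (e j) * bf p k (e k)) * ((1 / (N : ℝ)) ^ 2 * ⟪ws j, ws k⟫) := by
    intro e
    rw [norm_add_sq_real, norm_sq_smul_sum, real_inner_smul_right, inner_sum]
    simp only [real_inner_smul_right, mul_add, Finset.mul_sum]
    congr 1
    · congr 1
      exact Finset.sum_congr rfl fun k _ => by ring
    · exact Finset.sum_congr rfl fun j _ => Finset.sum_congr rfl fun k _ => by ring
  have hb0 : ∀ k : Fin K, p k * bf p k true + (1 - p k) * bf p k false = 0 := by
    intro k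
    have := (hp k).1.ne'
    simp only [bf, if_true, if_false, Bool.false_eq_true]
    field_simp
    ring
  have hb2 : ∀ k : Fin K,
      p k * (bf p k true * bf p k true) + (1 - p k) * (bf p k false * bf p k false)
        = (1 - p k) / p k := by
    intro k
    have := (hp k).1.ne'
    simp only [bf, if_true, if_false, Bool.false_eq_true]
    field_simp
    ring
  calc ∑ e : Fin K → Bool, P e *
        ‖(1 / (N : ℝ)) • (∑ k ∈ S, (if e k then (1 / p k) • ws k else 0)) -
          (1 / (K : ℝ)) • (∑ k, ws k)‖ ^ 2
      = ∑ e : Fin K → Bool, (P e * ‖A‖ ^ 2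
          + ∑ k ∈ S, (P e * bf p k (e k)) * ((2 / (N : ℝ)) * ⟪A, ws k⟫)
          + ∑ j ∈ S, ∑ k ∈ S,
              (P e * bf p j (e j) * bf p k (e k)) * ((1 / (N : ℝ)) ^ 2 * ⟪ws j, ws k⟫)) := by
        refine Finset.sum_congr rfl fun e _ => ?_
        rw [hX e, expand e]
    _ = (∑ e : Fin K → Bool, P e) * ‖A‖ ^ 2
        + (∑ k ∈ S, (∑ e : Fin K → Bool, P e * bf p k (e k)) * ((2 / (N : ℝ)) * ⟪A, ws k⟫))
        + ∑ j ∈ S, ∑ k ∈ S,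
            (∑ e : Fin K → Bool, P e * bf p j (e j) * bf p k (e k)) *
              ((1 / (N : ℝ)) ^ 2 * ⟪ws j, ws k⟫) := by
        rw [Finset.sum_add_distrib, Finset.sum_add_distrib, Finset.sum_mul]
        congr 1
        · congr 1
          rw [Finset.sum_comm]
          exact Finset.sum_congr rfl fun k _ => by rw [Finset.sum_mul]
        · rw [Finset.sum_comm]
          refine Finset.sum_congr rfl fun j _ => ?_
          rw [Finset.sum_comm]
          exact Finset.sum_congr rfl fun k _ => by rw [Finset.sum_mul]
    _ = ‖A‖ ^ 2 + (1 / (N : ℝ)) ^ 2 * ∑ k ∈ S, ((1 - p k) / p k) * ‖ws k‖ ^ 2 := by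
        rw [exp_mass, one_mul]
        have hzero : ∀ k ∈ S, (∑ e : Fin K → Bool, P e * bf p k (e k)) *
            ((2 / (N : ℝ)) * ⟪A, ws k⟫) = 0 := by
          intro k _
          rw [exp_one p k (bf p k), hb0 k, zero_mul]
        rw [Finset.sum_congr rfl hzero, Finset.sum_const, smul_zero, add_zero]
        congr 1
        have hdiag : ∀ j ∈ S, ∀ k ∈ S,
            (∑ e : Fin K → Bool, P e * bf p j (e j) * bf p k (e k)) *
                ((1 / (N : ℝ)) ^ 2 * ⟪ws j, ws k⟫)
              = if j = k then ((1 - p j) / p j) * ((1 / (N : ℝ)) ^ 2 * ⟪ws j, ws k⟫)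
                else 0 := by
          intro j _ k _
          by_cases hjk : j = k
          · subst hjk
            have h3 : ∀ e : Fin K → Bool, P e * bf p j (e j) * bf p j (e j)
                = P e * (fun b => bf p j b * bf p j b) (e j) := fun e => by ring
            rw [Finset.sum_congr rfl fun e _ => h3 e, exp_one p j
              (fun b => bf p j b * bf p j b), hb2 j, if_pos rfl]
          · rw [exp_two p hjk (bf p j) (bf p k), hb0 j, hb0 k, zero_mul, zero_mul,
              if_neg hjk]
        calc ∑ j ∈ S, ∑ k ∈ S,
              (∑ e : Fin K → Bool, P e * bf p j (e j) * bf p k (e k)) *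
                ((1 / (N : ℝ)) ^ 2 * ⟪ws j, ws k⟫)
            = ∑ j ∈ S, ∑ k ∈ S,
                (if j = k then ((1 - p j) / p j) * ((1 / (N : ℝ)) ^ 2 * ⟪ws j, ws k⟫)
                  else 0) :=
              Finset.sum_congr rfl fun j hj =>
                Finset.sum_congr rfl fun k hk => hdiag j hj k hk
          _ = ∑ j ∈ S, ((1 - p j) / p j) * ((1 / (N : ℝ)) ^ 2 * ⟪ws j, ws j⟫) := by
              refine Finset.sum_congr rfl fun j hj => ?_
              rw [Finset.sum_ite_eq S j
                (fun k => ((1 - p j) / p j) * ((1 / (N : ℝ)) ^ 2 * ⟪ws j, ws k⟫)),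
                if_pos hj]
          _ = (1 / (N : ℝ)) ^ 2 * ∑ k ∈ S, ((1 - p k) / p k) * ‖ws k‖ ^ 2 := by
              rw [Finset.mul_sum]
              refine Finset.sum_congr rfl fun j _ => ?_
              rw [real_inner_self_eq_norm_sq]
              ring

end Aux

set_option maxHeartbeats 1600000

/-- DDS expected squared weight divergence bound (Lemma 2). -/
theorem dds_weight_divergence_bound
    {V : Type*} [NormedAddCommGroup V] [InnerProductSpace ℝ V]
    (K N : ℕ) (hK : 2 ≤ K) (hN1 : 1 ≤ N) (hNK : N ≤ K)
    (w : V) (ws : Fin K → V) (p : Fin K → ℝ)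
    (hp : ∀ k, 0 < p k ∧ p k ≤ 1)
    (c G : ℝ) (hc : 0 ≤ c) (hG : 0 ≤ G)
    (hbound : ∀ k, ‖ws k - w‖ ≤ c) (hG' : ∀ k, ‖ws k‖ ≤ G) :
    (1 / (Nat.choose K N : ℝ)) *
      ∑ S ∈ Finset.powersetCard N (Finset.univ : Finset (Fin K)),
        ∑ e : Fin K → Bool,
          (∏ k, if e k then p k else 1 - p k) *
            ‖(1 / (N : ℝ)) • (∑ k ∈ S, (if e k then (1 / p k) • ws k else 0)) -
              (1 / (K : ℝ)) • (∑ k, ws k)‖ ^ 2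
    ≤ ∑ k, (c ^ 2 * ((K : ℝ) - N) / ((K : ℝ) * N * ((K : ℝ) - 1)) +
        ((1 - p k) / ((K : ℝ) * p k)) * G ^ 2) := by
  classical
  have hCpos : 0 < K.choose N := Nat.choose_pos hNK
  have hCr : (0:ℝ) < (K.choose N : ℝ) := by exact_mod_cast hCpos
  have hKpos : 0 < K := by omega
  have hKr : (0:ℝ) < (K:ℝ) := by exact_mod_cast hKpos
  have hNr : (0:ℝ) < (N:ℝ) := by exact_mod_cast (by omega : 0 < N)
  have hK2r : (2:ℝ) ≤ (K:ℝ) := by exact_mod_cast hK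
  have hK1r : (0:ℝ) < (K:ℝ) - 1 := by linarith
  have hNKr : (N:ℝ) ≤ (K:ℝ) := by exact_mod_cast hNK
  have hN1r : (1:ℝ) ≤ (N:ℝ) := by exact_mod_cast hN1
  set wstar : V := (1 / (K:ℝ)) • ∑ k, ws k with hwstar
  set v : Fin K → V := fun k => ws k - wstar with hv
  have hsumv : ∑ k, v k = 0 := by
    simp only [hv]
    rw [Finset.sum_sub_distrib, Finset.sum_const, card_univ, Fintype.card_fin,
      sub_eq_zero, ← Nat.cast_smul_eq_nsmul ℝ K wstar, hwstar, smul_smul]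
    rw [show (K:ℝ) * (1 / (K:ℝ)) = 1 by field_simp, one_smul]
  set m1r : ℝ := (K.choose N : ℝ) * N / K with hm1r
  set m2r : ℝ := (K.choose N : ℝ) * ((N:ℝ) * ((N:ℝ) - 1)) / ((K:ℝ) * ((K:ℝ) - 1)) with hm2r
  have hm1 : ∀ k : Fin K,
      ((((univ : Finset (Fin K)).powersetCard N).filter (fun S => k ∈ S)).card : ℝ)
        = m1r := by
    intro k
    have h := count_one (K := K) hN1 k
    have h2 := choose_id1 (K := K) hN1 hNK
    have hcast : (K:ℝ) * (((K - 1).choose (N - 1) : ℕ) : ℝ)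
        = (K.choose N : ℝ) * (N:ℝ) := by exact_mod_cast h2
    rw [h, hm1r, eq_div_iff hKr.ne']
    linear_combination hcast
  have hm2 : ∀ j k : Fin K, j ≠ k →
      ((((univ : Finset (Fin K)).powersetCard N).filter
          (fun S => j ∈ S ∧ k ∈ S)).card : ℝ) = m2r := by
    intro j k hjk
    have h := count_two (K := K) hK hN1 hNK hjk
    have hcast := congrArg (Nat.cast : ℕ → ℝ) h
    push_cast [Nat.cast_sub (by omega : 1 ≤ K), Nat.cast_sub hN1] at hcast
    rw [hm2r, eq_div_iff (by positivity : ((K:ℝ) * ((K:ℝ) - 1)) ≠ 0)]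
    linear_combination hcast
  -- variance bound for the centered vectors
  have hvar : ∑ k, ‖v k‖ ^ 2 ≤ (K:ℝ) * c ^ 2 := by
    have h2 : ∀ k : Fin K,
        ‖ws k - w‖ ^ 2 = ‖v k‖ ^ 2 + 2 * ⟪v k, wstar - w⟫ + ‖wstar - w‖ ^ 2 := by
      intro k
      have hd : ws k - w = v k + (wstar - w) := by simp only [hv]; abel
      rw [hd, norm_add_sq_real]
    have h1 : ∑ k, ‖ws k - w‖ ^ 2
        = (∑ k, ‖v k‖ ^ 2) + (K:ℝ) * ‖wstar - w‖ ^ 2 := by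
      rw [Finset.sum_congr rfl fun k _ => h2 k, Finset.sum_add_distrib,
        Finset.sum_add_distrib]
      have hz : ∑ k : Fin K, 2 * ⟪v k, wstar - w⟫ = 0 := by
        rw [← Finset.mul_sum, ← sum_inner, hsumv, inner_zero_left, mul_zero]
      rw [hz, add_zero, Finset.sum_const, card_univ, Fintype.card_fin, nsmul_eq_mul]
    have h3 : ∑ k, ‖ws k - w‖ ^ 2 ≤ (K:ℝ) * c ^ 2 := by
      calc ∑ k, ‖ws k - w‖ ^ 2 ≤ ∑ _k : Fin K, c ^ 2 :=
            Finset.sum_le_sum fun k _ => by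
              have h := hbound k
              have h0 := norm_nonneg (ws k - w)
              nlinarith
        _ = (K:ℝ) * c ^ 2 := by
            rw [Finset.sum_const, card_univ, Fintype.card_fin, nsmul_eq_mul]
    nlinarith [sq_nonneg ‖wstar - w‖]
  -- the φ sums
  have hφ0 : ∀ k : Fin K, (0:ℝ) ≤ ((1 - p k) / p k) * G ^ 2 :=
    fun k => mul_nonneg (div_nonneg (by linarith [(hp k).2]) (hp k).1.le) (sq_nonneg G)
  have hφle : ∑ k, ((1 - p k) / p k) * ‖ws k‖ ^ 2 ≤ ∑ k, ((1 - p k) / p k) * G ^ 2 :=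
    Finset.sum_le_sum fun k _ =>
      mul_le_mul_of_nonneg_left
        (by nlinarith [hG' k, norm_nonneg (ws k)])
        (div_nonneg (by linarith [(hp k).2]) (hp k).1.le)
  have hφpos : (0:ℝ) ≤ ∑ k, ((1 - p k) / p k) * G ^ 2 :=
    Finset.sum_nonneg fun k _ => hφ0 k
  -- per-S reduction
  calc (1 / (Nat.choose K N : ℝ)) *
      ∑ S ∈ Finset.powersetCard N (Finset.univ : Finset (Fin K)),
        ∑ e : Fin K → Bool,
          (∏ k, if e k then p k else 1 - p k) *
            ‖(1 / (N : ℝ)) • (∑ k ∈ S, (if e k then (1 / p k) • ws k else 0)) -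
              (1 / (K : ℝ)) • (∑ k, ws k)‖ ^ 2
      = (1 / (Nat.choose K N : ℝ)) *
          ∑ S ∈ Finset.powersetCard N (Finset.univ : Finset (Fin K)),
            ((1 / (N : ℝ)) ^ 2 * (∑ j ∈ S, ∑ k ∈ S, ⟪v j, v k⟫)
              + (1 / (N : ℝ)) ^ 2 * ∑ k ∈ S, ((1 - p k) / p k) * ‖ws k‖ ^ 2) := by
        congr 1
        refine Finset.sum_congr rfl fun S hS => ?_
        rw [perS ws p hp S]
        congr 1
        have hcard : S.card = N := (mem_powersetCard.mp hS).2
        have hdec : (1/(N:ℝ)) • (∑ k ∈ S, ws k) - (1/(K:ℝ)) • ∑ k, ws k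
            = (1/(N:ℝ)) • (∑ k ∈ S, (1:ℝ) • v k) := by
          simp only [one_smul, hv]
          rw [Finset.sum_sub_distrib, Finset.sum_const, hcard, smul_sub,
            ← Nat.cast_smul_eq_nsmul ℝ N wstar, smul_smul,
            show (1/(N:ℝ)) * (N:ℝ) = 1 by field_simp, one_smul, hwstar]
        rw [hdec, norm_sq_smul_sum]
        simp only [one_mul]
    _ = (1 / (Nat.choose K N : ℝ)) *
          ((1 / (N : ℝ)) ^ 2 * ((m1r - m2r) * ∑ j, ‖v j‖ ^ 2)
            + (1 / (N : ℝ)) ^ 2 * (m1r * ∑ k, ((1 - p k) / p k) * ‖ws k‖ ^ 2)) := by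
        congr 1
        rw [Finset.sum_add_distrib, ← Finset.mul_sum, ← Finset.mul_sum]
        congr 1
        · congr 1
          rw [sum_over_sets_double]
          have hterm : ∀ j k : Fin K,
              ((((univ : Finset (Fin K)).powersetCard N).filter
                  (fun S => j ∈ S ∧ k ∈ S)).card : ℝ) * ⟪v j, v k⟫
                = m2r * ⟪v j, v k⟫
                  + (if j = k then (m1r - m2r) * ⟪v j, v k⟫ else 0) := by
            intro j k
            by_cases hjk : j = k
            · subst hjk
              have heq : (((univ : Finset (Fin K)).powersetCard N).filter
                    (fun S => j ∈ S ∧ j ∈ S))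
                  = ((univ : Finset (Fin K)).powersetCard N).filter (fun S => j ∈ S) := by
                simp only [and_self]
              rw [heq, hm1 j, if_pos rfl]; ring
            · rw [hm2 j k hjk, if_neg hjk]; ring
          rw [Finset.sum_congr rfl fun j _ => Finset.sum_congr rfl fun k _ => hterm j k]
          simp only [Finset.sum_add_distrib]
          have hfirst : ∑ j : Fin K, ∑ k : Fin K, m2r * ⟪v j, v k⟫ = 0 := by
            simp only [← Finset.mul_sum]
            have h0 : ∑ j : Fin K, ∑ k : Fin K, ⟪v j, v k⟫ = (0:ℝ) := by
              have hi := inner_sum_sum (univ : Finset (Fin K)) (fun _ => (1:ℝ)) v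
              simp only [one_smul, one_mul] at hi
              rw [← hi, hsumv, inner_zero_left]
            rw [h0, mul_zero]
          have hsecond : ∑ j : Fin K, ∑ k : Fin K,
              (if j = k then (m1r - m2r) * ⟪v j, v k⟫ else 0)
                = (m1r - m2r) * ∑ j, ‖v j‖ ^ 2 := by
            rw [Finset.mul_sum]
            refine Finset.sum_congr rfl fun j _ => ?_
            rw [Finset.sum_ite_eq (univ : Finset (Fin K)) j
              (fun k => (m1r - m2r) * ⟪v j, v k⟫), if_pos (mem_univ j),
              real_inner_self_eq_norm_sq]
          rw [hfirst, hsecond, zero_add]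
        · congr 1
          rw [sum_over_sets_single, Finset.mul_sum]
          exact Finset.sum_congr rfl fun k _ => by rw [hm1 k]
    _ ≤ ∑ k, (c ^ 2 * ((K : ℝ) - N) / ((K : ℝ) * N * ((K : ℝ) - 1)) +
        ((1 - p k) / ((K : ℝ) * p k)) * G ^ 2) := by
        have hαnn : (0:ℝ) ≤ ((K:ℝ) - N) / ((K:ℝ) * N * ((K:ℝ) - 1)) :=
          div_nonneg (by linarith) (by positivity)
        have hcoef1 : (1 / (K.choose N : ℝ)) * ((1 / (N:ℝ)) ^ 2 * (m1r - m2r))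
            = ((K:ℝ) - N) / ((K:ℝ) * N * ((K:ℝ) - 1)) := by
          rw [hm1r, hm2r]
          field_simp
          ring
        have hcoef2 : (1 / (K.choose N : ℝ)) * ((1 / (N:ℝ)) ^ 2 * m1r)
            = 1 / ((N:ℝ) * K) := by
          rw [hm1r]
          field_simp
        have hsplit : (1 / (K.choose N : ℝ)) *
              ((1 / (N:ℝ)) ^ 2 * ((m1r - m2r) * ∑ j, ‖v j‖ ^ 2)
                + (1 / (N:ℝ)) ^ 2 * (m1r * ∑ k, ((1 - p k) / p k) * ‖ws k‖ ^ 2))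
            = ((1 / (K.choose N : ℝ)) * ((1 / (N:ℝ)) ^ 2 * (m1r - m2r))) * (∑ j, ‖v j‖ ^ 2)
              + ((1 / (K.choose N : ℝ)) * ((1 / (N:ℝ)) ^ 2 * m1r)) *
                  (∑ k, ((1 - p k) / p k) * ‖ws k‖ ^ 2) := by
          ring
        rw [hsplit, hcoef1, hcoef2]
        have hvnn : (0:ℝ) ≤ ∑ j, ‖v j‖ ^ 2 := Finset.sum_nonneg fun j _ => sq_nonneg _
        calc (((K:ℝ) - N) / ((K:ℝ) * N * ((K:ℝ) - 1))) * (∑ j, ‖v j‖ ^ 2)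
              + (1 / ((N:ℝ) * K)) * (∑ k, ((1 - p k) / p k) * ‖ws k‖ ^ 2)
            ≤ (((K:ℝ) - N) / ((K:ℝ) * N * ((K:ℝ) - 1))) * ((K:ℝ) * c ^ 2)
              + (1 / ((N:ℝ) * K)) * (∑ k, ((1 - p k) / p k) * G ^ 2) :=
              add_le_add (mul_le_mul_of_nonneg_left hvar hαnn)
                (mul_le_mul_of_nonneg_left hφle (by positivity))
          _ ≤ (((K:ℝ) - N) / ((K:ℝ) * N * ((K:ℝ) - 1))) * ((K:ℝ) * c ^ 2)
              + (1 / (K:ℝ)) * (∑ k, ((1 - p k) / p k) * G ^ 2) := by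
              have hle : (1:ℝ) / ((N:ℝ) * K) ≤ 1 / (K:ℝ) := by
                apply one_div_le_one_div_of_le hKr
                nlinarith [mul_nonneg (sub_nonneg.mpr hN1r) hKr.le]
              exact add_le_add (le_refl _) (mul_le_mul_of_nonneg_right hle hφpos)
          _ = ∑ k, (c ^ 2 * ((K : ℝ) - N) / ((K : ℝ) * N * ((K : ℝ) - 1)) +
              ((1 - p k) / ((K : ℝ) * p k)) * G ^ 2) := by
              rw [Finset.sum_add_distrib]
              congr 1
              · rw [Finset.sum_const, card_univ, Fintype.card_fin, nsmul_eq_mul]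
                field_simp
              · rw [Finset.mul_sum]
                refine Finset.sum_congr rfl fun k _ => ?_
                have hpk := (hp k).1.ne'
                field_simp
end

section
/- If the learning rate satisfies η ≤ G/(T·γ), then the GoMORE weight-divergence upper bound is strictly smaller than the DDS weight-divergence upper bound: Σ_{k=1}^K (η²T²γ²/K)·( ((K−N)/(N(K−1)))·p_k² − p_k + 1 ) < Σ_{k=1}^K ( η²T²γ²·(K−N)/(K·N·(K−1)) + ((1−p_k)/(K·p_k))·G² ). -/
lemma gomore_aux (A q G Kr Nr : ℝ) (hK0 : 0 < Kr) (hK1 : 0 < Kr - 1) (hN0 : 0 < Nr) (hq : 0 < q) :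
    (A * ((Kr - Nr) / (Nr * (Kr - 1))) + (1 - q) / q * G ^ 2) / Kr =
    A * (Kr - Nr) / (Kr * Nr * (Kr - 1)) + (1 - q) / (Kr * q) * G ^ 2 := by
  field_simp

/-- Theorem 1: for learning rate η ≤ G/(Tγ), the GoMORE upper bound ζ̄₁ is
strictly smaller than the DDS upper bound ζ̄₂. -/
theorem gomore_bound_lt_dds_bound
    (K N : ℕ) (hK : 2 ≤ K) (hN1 : 1 ≤ N) (hNK : N ≤ K)
    (p : Fin K → ℝ) (hp : ∀ k, 0 < p k ∧ p k < 1)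
    (η T γ G : ℝ) (hη : 0 < η) (hT : 0 < T) (hγ : 0 < γ) (hG : 0 < G)
    (hlr : η ≤ G / (T * γ)) :
    ∑ k, (η ^ 2 * T ^ 2 * γ ^ 2 / (K : ℝ)) *
        (((K : ℝ) - N) / ((N : ℝ) * ((K : ℝ) - 1)) * (p k) ^ 2 - p k + 1)
    < ∑ k, (η ^ 2 * T ^ 2 * γ ^ 2 * ((K : ℝ) - N) / ((K : ℝ) * N * ((K : ℝ) - 1)) +
        ((1 - p k) / ((K : ℝ) * p k)) * G ^ 2) := by
  have hKR : (2 : ℝ) ≤ (K : ℝ) := by exact_mod_cast hK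
  have hK0 : (0 : ℝ) < (K : ℝ) := by linarith
  have hK1 : (0 : ℝ) < (K : ℝ) - 1 := by linarith
  have hNR : (1 : ℝ) ≤ (N : ℝ) := by exact_mod_cast hN1
  have hN0 : (0 : ℝ) < (N : ℝ) := by linarith
  have hNKR : (N : ℝ) ≤ (K : ℝ) := by exact_mod_cast hNK
  have hTγ : 0 < T * γ := mul_pos hT hγ
  have hA : η * T * γ ≤ G := by
    calc η * T * γ = η * (T * γ) := by ring
    _ ≤ (G / (T * γ)) * (T * γ) := by
        exact mul_le_mul_of_nonneg_right hlr (le_of_lt hTγ)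
    _ = G := by field_simp
  have hA2 : η ^ 2 * T ^ 2 * γ ^ 2 ≤ G ^ 2 := by
    have h1 : 0 < η * T * γ := by positivity
    nlinarith
  have hApos : 0 < η ^ 2 * T ^ 2 * γ ^ 2 := by positivity
  apply Finset.sum_lt_sum_of_nonempty
  · exact Finset.univ_nonempty_iff.mpr ⟨⟨0, by omega⟩⟩
  · intro k _
    obtain ⟨hp0, hp1⟩ := hp k
    set A := η ^ 2 * T ^ 2 * γ ^ 2 with hAdef
    set c := ((K : ℝ) - N) / ((N : ℝ) * ((K : ℝ) - 1)) with hcdef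
    have hc : 0 ≤ c := div_nonneg (by linarith) (by positivity)
    have h1 : A * (1 - p k) < (1 - p k) / p k * G ^ 2 := by
      rw [div_mul_eq_mul_div, lt_div_iff₀ hp0]
      have h1a : A * ((1 - p k) * p k) ≤ G ^ 2 * ((1 - p k) * p k) :=
        mul_le_mul_of_nonneg_right hA2
          (mul_nonneg (by linarith) hp0.le)
      have h1b : G ^ 2 * (1 - p k) * p k < G ^ 2 * (1 - p k) :=
        mul_lt_of_lt_one_right (by nlinarith) hp1
      nlinarith
    have h2 : A * c * (p k ^ 2) ≤ A * c :=
      mul_le_of_le_one_right (mul_nonneg hApos.le hc) (by nlinarith)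
    clear_value A c
    have key : A * (c * p k ^ 2 - p k + 1) < A * c + (1 - p k) / p k * G ^ 2 := by
      nlinarith
    calc A / (K : ℝ) * (c * p k ^ 2 - p k + 1)
        = (A * (c * p k ^ 2 - p k + 1)) / (K : ℝ) := by ring
      _ < (A * c + (1 - p k) / p k * G ^ 2) / (K : ℝ) := by
          gcongr
      _ = A * ((K : ℝ) - N) / ((K : ℝ) * N * ((K : ℝ) - 1)) +
          (1 - p k) / ((K : ℝ) * p k) * G ^ 2 := by
          rw [hcdef]
          exact gomore_aux A (p k) G _ _ hK0 hK1 hN0 hp0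
end

section
/- If the learning rate satisfies η ≤ G/(T·γ), then the gap between the DDS and GoMORE upper bounds satisfies ζ̄₂ − ζ̄₁ ≥ Σ_{k=1}^K (η²T²γ²/K)·( (K−N)(1−p_k²)/(N(K−1)) + (1−p_k)²/p_k ), and this right-hand side is strictly positive. -/
/-- Gap between DDS and GoMORE upper bounds: ζ̄₂ − ζ̄₁ is bounded below by the
given positive sum, whenever η ≤ G/(Tγ). -/
theorem dds_gomore_gap_bound
    (K N : ℕ) (hK : 2 ≤ K) (hN1 : 1 ≤ N) (hNK : N ≤ K)
    (p : Fin K → ℝ) (hp : ∀ k, 0 < p k ∧ p k < 1)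
    (η T γ G : ℝ) (hη : 0 < η) (hT : 0 < T) (hγ : 0 < γ) (hG : 0 < G)
    (hlr : η ≤ G / (T * γ)) :
    (∑ k, (η ^ 2 * T ^ 2 * γ ^ 2 * ((K : ℝ) - N) / ((K : ℝ) * N * ((K : ℝ) - 1)) +
        ((1 - p k) / ((K : ℝ) * p k)) * G ^ 2)) -
      (∑ k, (η ^ 2 * T ^ 2 * γ ^ 2 / (K : ℝ)) *
        (((K : ℝ) - N) / ((N : ℝ) * ((K : ℝ) - 1)) * (p k) ^ 2 - p k + 1))
    ≥ ∑ k, (η ^ 2 * T ^ 2 * γ ^ 2 / (K : ℝ)) *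
        (((K : ℝ) - N) * (1 - (p k) ^ 2) / ((N : ℝ) * ((K : ℝ) - 1)) +
          (1 - p k) ^ 2 / p k)
    ∧ 0 < ∑ k, (η ^ 2 * T ^ 2 * γ ^ 2 / (K : ℝ)) *
        (((K : ℝ) - N) * (1 - (p k) ^ 2) / ((N : ℝ) * ((K : ℝ) - 1)) +
          (1 - p k) ^ 2 / p k) := by
  have hK0 : (0:ℝ) < (K:ℝ) := by positivity
  have hK2 : (2:ℝ) ≤ (K:ℝ) := by exact_mod_cast hK
  have hN0 : (0:ℝ) < (N:ℝ) := by exact_mod_cast hN1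
  have hKN : (N:ℝ) ≤ (K:ℝ) := by exact_mod_cast hNK
  have hK1 : (0:ℝ) < (K:ℝ) - 1 := by linarith
  have hKne : (K:ℝ) ≠ 0 := ne_of_gt hK0
  have hNne : (N:ℝ) ≠ 0 := ne_of_gt hN0
  have hK1ne : (K:ℝ) - 1 ≠ 0 := ne_of_gt hK1
  have hηTγ : η * T * γ ≤ G := by
    have h := (le_div_iff₀ (mul_pos hT hγ)).mp hlr
    nlinarith [h]
  have hc : η ^ 2 * T ^ 2 * γ ^ 2 ≤ G ^ 2 := by
    have h1 : 0 < η * T * γ := by positivity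
    nlinarith [hηTγ, h1]
  constructor
  · rw [ge_iff_le, ← sub_nonneg, ← Finset.sum_sub_distrib, ← Finset.sum_sub_distrib]
    apply Finset.sum_nonneg
    intro k _
    obtain ⟨hp0, hp1⟩ := hp k
    have key : η ^ 2 * T ^ 2 * γ ^ 2 * ((K : ℝ) - N) / ((K : ℝ) * N * ((K : ℝ) - 1)) +
        ((1 - p k) / ((K : ℝ) * p k)) * G ^ 2 -
        (η ^ 2 * T ^ 2 * γ ^ 2 / (K : ℝ)) *
          (((K : ℝ) - N) / ((N : ℝ) * ((K : ℝ) - 1)) * (p k) ^ 2 - p k + 1) -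
        (η ^ 2 * T ^ 2 * γ ^ 2 / (K : ℝ)) *
          (((K : ℝ) - N) * (1 - (p k) ^ 2) / ((N : ℝ) * ((K : ℝ) - 1)) +
            (1 - p k) ^ 2 / p k)
        = ((1 - p k) / ((K : ℝ) * p k)) * (G ^ 2 - η ^ 2 * T ^ 2 * γ ^ 2) := by
      field_simp
      ring
    have hpos : 0 ≤ ((1 - p k) / ((K : ℝ) * p k)) * (G ^ 2 - η ^ 2 * T ^ 2 * γ ^ 2) := by
      apply mul_nonneg
      · apply div_nonneg (by linarith) (by positivity)
      · linarith
    linarith [key ▸ hpos]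
  · apply Finset.sum_pos
    · intro k _
      obtain ⟨hp0, hp1⟩ := hp k
      have h1 : 0 < (1 - p k) ^ 2 / p k := div_pos (pow_pos (by linarith) 2) hp0
      have h2 : 0 ≤ ((K : ℝ) - N) * (1 - (p k) ^ 2) / ((N : ℝ) * ((K : ℝ) - 1)) := by
        apply div_nonneg
        · apply mul_nonneg <;> nlinarith
        · positivity
      have h3 : 0 < η ^ 2 * T ^ 2 * γ ^ 2 / (K : ℝ) := by positivity
      nlinarith
    · exact Finset.univ_nonempty_iff.mpr (Fin.pos_iff_nonempty.mp (by omega))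
end

section
/- If v_1, …, v_K are vectors in a real inner product space with Σ_{k=1}^K v_k = 0, then the average over all N-element subsets S of {1,…,K} of ‖Σ_{k∈S} v_k‖² equals (N(K−N)/(K(K−1))) · Σ_{k=1}^K ‖v_k‖²; that is, (1/binom(K,N)) Σ_{S : |S|=N} ‖Σ_{k∈S} v_k‖² = (N(K−N)/(K(K−1))) Σ_{k=1}^K ‖v_k‖². -/
open Finset

lemma count_subsets {α : Type*} [DecidableEq α] (s T : Finset α) (hT : T ⊆ s)
    (N : ℕ) (hTN : T.card ≤ N) :
    ((Finset.powersetCard N s).filter (fun S => T ⊆ S)).card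
      = (s.card - T.card).choose (N - T.card) := by
  rw [← Finset.card_sdiff_of_subset hT, ← Finset.card_powersetCard]
  apply Finset.card_bij' (fun S _ => S \ T) (fun A _ => A ∪ T)
  · intro S hS
    simp only [mem_filter, mem_powersetCard] at hS
    obtain ⟨⟨hSs, hScard⟩, hTS⟩ := hS
    simp only [mem_powersetCard]
    exact ⟨sdiff_subset_sdiff hSs le_rfl,
      by rw [Finset.card_sdiff_of_subset hTS, hScard]⟩
  · intro A hA
    simp only [mem_powersetCard] at hA
    obtain ⟨hAs, hAcard⟩ := hA
    have hdisj : Disjoint A T := Finset.disjoint_of_subset_left hAs sdiff_disjoint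
    simp only [mem_filter, mem_powersetCard]
    refine ⟨⟨Finset.union_subset (hAs.trans (Finset.sdiff_subset)) hT, ?_⟩,
      Finset.subset_union_right⟩
    rw [Finset.card_union_of_disjoint hdisj, hAcard]
    omega
  · intro S hS
    simp only [mem_filter] at hS
    exact Finset.sdiff_union_of_subset hS.2
  · intro A hA
    simp only [mem_powersetCard] at hA
    have hdisj : Disjoint A T := Finset.disjoint_of_subset_left hA.1 sdiff_disjoint
    rw [Finset.union_sdiff_right, Finset.sdiff_eq_self_of_disjoint hdisj]

lemma count_subsets_empty {α : Type*} [DecidableEq α] (s T : Finset α)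
    (N : ℕ) (hTN : N < T.card) :
    ((Finset.powersetCard N s).filter (fun S => T ⊆ S)).card = 0 := by
  rw [Finset.card_eq_zero, Finset.filter_eq_empty_iff]
  intro S hS hTS
  simp only [mem_powersetCard] at hS
  have := Finset.card_le_card hTS
  omega

/-- Sampling-without-replacement variance identity: if the `v k` sum to zero,
the average over all `N`-element subsets `S` of `‖∑_{k∈S} v k‖²` equals
`(N(K−N)/(K(K−1))) ∑ ‖v k‖²`. -/
theorem subset_sampling_variance
    {V : Type*} [NormedAddCommGroup V] [InnerProductSpace ℝ V]
    (K N : ℕ) (hK : 2 ≤ K) (hN1 : 1 ≤ N) (hNK : N ≤ K)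
    (v : Fin K → V) (hsum : ∑ k, v k = 0) :
    (1 / (Nat.choose K N : ℝ)) *
      ∑ S ∈ Finset.powersetCard N (Finset.univ : Finset (Fin K)),
        ‖∑ k ∈ S, v k‖ ^ 2
    = ((N : ℝ) * ((K : ℝ) - N) / ((K : ℝ) * ((K : ℝ) - 1))) * ∑ k, ‖v k‖ ^ 2 := by
  classical
  set f : Fin K → Fin K → ℝ := fun i j => inner ℝ (v i) (v j) with hf
  set C1 : ℕ := (K - 1).choose (N - 1) with hC1
  set C2 : ℕ := if 2 ≤ N then (K - 2).choose (N - 2) else 0 with hC2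
  set P := Finset.powersetCard N (Finset.univ : Finset (Fin K)) with hP
  have hcount : ∀ i j : Fin K,
      (P.filter (fun S => i ∈ S ∧ j ∈ S)).card = if i = j then C1 else C2 := by
    intro i j
    have hfe : P.filter (fun S => i ∈ S ∧ j ∈ S)
        = P.filter (fun S => ({i, j} : Finset (Fin K)) ⊆ S) := by
      apply Finset.filter_congr
      intro S _
      simp [Finset.insert_subset_iff]
    rw [hfe]
    by_cases hij : i = j
    · subst hij
      have h1 : ({i, i} : Finset (Fin K)) = {i} := by simp
      rw [if_pos rfl, h1, hP, count_subsets _ _ (by simp) N (by simpa using hN1)]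
      simp [hC1, Finset.card_univ]
    · rw [if_neg hij]
      have hcard : ({i, j} : Finset (Fin K)).card = 2 := by
        rw [Finset.card_insert_of_notMem (by simpa using hij), Finset.card_singleton]
      by_cases h2 : 2 ≤ N
      · rw [hP, count_subsets _ _ (by simp) N (by omega)]
        simp [hC2, h2, hcard, Finset.card_univ]
      · rw [hP, count_subsets_empty _ _ N (by omega)]
        simp [hC2, h2]
  have hnorm : ∀ S : Finset (Fin K),
      (‖∑ k ∈ S, v k‖ : ℝ) ^ 2 = ∑ i ∈ S, ∑ j ∈ S, f i j := by
    intro S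
    rw [← real_inner_self_eq_norm_sq, sum_inner]
    exact Finset.sum_congr rfl fun i _ => inner_sum _ _ _
  have expand : ∀ S : Finset (Fin K), ∑ i ∈ S, ∑ j ∈ S, f i j
      = ∑ i : Fin K, ∑ j : Fin K, if i ∈ S ∧ j ∈ S then f i j else 0 := by
    intro S
    have : ∀ i : Fin K, (∑ j : Fin K, if i ∈ S ∧ j ∈ S then f i j else 0)
        = if i ∈ S then ∑ j ∈ S, f i j else 0 := by
      intro i
      by_cases hi : i ∈ S
      · simp only [hi, true_and, if_pos]
        rw [Finset.sum_ite_mem, Finset.univ_inter]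
      · simp [hi]
    rw [Finset.sum_congr rfl fun i _ => this i, Finset.sum_ite_mem, Finset.univ_inter]
  have hswap : ∑ S ∈ P, ‖∑ k ∈ S, v k‖ ^ 2
      = ∑ i, ∑ j, ((if i = j then C1 else C2 : ℕ) : ℝ) * f i j := by
    simp_rw [hnorm, expand]
    rw [Finset.sum_comm]
    refine Finset.sum_congr rfl fun i _ => ?_
    rw [Finset.sum_comm]
    refine Finset.sum_congr rfl fun j _ => ?_
    rw [← Finset.sum_filter, Finset.sum_const, hcount i j, nsmul_eq_mul]
  -- total cross sum is zero
  have htot : ∑ i, ∑ j, f i j = 0 := by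
    have : ∑ i, ∑ j, f i j = inner ℝ (∑ k, v k) (∑ k, v k) := by
      rw [sum_inner]
      exact Finset.sum_congr rfl fun i _ => (inner_sum _ _ _).symm
    rw [this, hsum, inner_zero_left]
  have hdiag : ∀ i : Fin K, f i i = ‖v i‖ ^ 2 := fun i => real_inner_self_eq_norm_sq _
  have hsplit : ∑ i, ∑ j, ((if i = j then C1 else C2 : ℕ) : ℝ) * f i j
      = ((C1 : ℝ) - C2) * ∑ k, ‖v k‖ ^ 2 := by
    have : ∀ i j : Fin K, ((if i = j then C1 else C2 : ℕ) : ℝ) * f i j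
        = (C2 : ℝ) * f i j + (if i = j then ((C1 : ℝ) - C2) * f i j else 0) := by
      intro i j
      by_cases hij : i = j
      · subst hij; rw [if_pos rfl, if_pos rfl]; ring
      · rw [if_neg hij, if_neg hij]; ring
    simp_rw [this, Finset.sum_add_distrib]
    have t1 : ∑ i : Fin K, ∑ j : Fin K, (C2 : ℝ) * f i j = 0 := by
      simp_rw [← Finset.mul_sum]
      rw [htot, mul_zero]
    have t2 : ∀ i : Fin K, (∑ j : Fin K, if i = j then ((C1 : ℝ) - C2) * f i j else 0)
        = ((C1 : ℝ) - C2) * f i i := by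
      intro i
      rw [Finset.sum_ite_eq]
      simp
    rw [t1, zero_add, Finset.sum_congr rfl fun i _ => t2 i, ← Finset.mul_sum]
    exact congrArg _ (Finset.sum_congr rfl fun i _ => hdiag i)
  rw [hswap, hsplit]
  -- numeric identity
  have hCpos : (0 : ℝ) < (Nat.choose K N : ℝ) := by
    exact_mod_cast Nat.choose_pos hNK
  have hA : (K : ℝ) * C1 = (N : ℝ) * (Nat.choose K N : ℝ) := by
    have := Nat.add_one_mul_choose_eq (K - 1) (N - 1)
    have h1 : K - 1 + 1 = K := by omega
    have h2 : N - 1 + 1 = N := by omega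
    rw [h1, h2] at this
    exact_mod_cast this.trans (mul_comm _ _)
  have hB : ((K : ℝ) - 1) * C2 = ((N : ℝ) - 1) * C1 := by
    by_cases h2 : 2 ≤ N
    · have := Nat.add_one_mul_choose_eq (K - 2) (N - 2)
      have h1 : K - 2 + 1 = K - 1 := by omega
      have h2' : N - 2 + 1 = N - 1 := by omega
      rw [h1, h2'] at this
      have hcast : ((K - 1 : ℕ) : ℝ) * ((K - 2).choose (N - 2) : ℝ)
          = ((N - 1 : ℕ) : ℝ) * (C1 : ℝ) := by
        exact_mod_cast this.trans (mul_comm _ _)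
      rw [hC2, if_pos h2]
      have e1 : ((K - 1 : ℕ) : ℝ) = (K : ℝ) - 1 := by
        push_cast [Nat.cast_sub (by omega : 1 ≤ K)]; ring
      have e2 : ((N - 1 : ℕ) : ℝ) = (N : ℝ) - 1 := by
        push_cast [Nat.cast_sub (by omega : 1 ≤ N)]; ring
      rw [← e1, ← e2]; exact hcast
    · have hN : N = 1 := by omega
      rw [hC2, if_neg h2, hN]
      norm_num
  have hK0 : (K : ℝ) ≠ 0 := by positivity
  have hK1 : (K : ℝ) - 1 ≠ 0 := by
    have : (2 : ℝ) ≤ K := by exact_mod_cast hK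
    linarith
  -- goal: (1/C) * ((C1 - C2) * D) = N(K-N)/(K(K-1)) * D
  have key : ((C1 : ℝ) - C2) * ((K : ℝ) * ((K : ℝ) - 1))
      = (N : ℝ) * ((K : ℝ) - N) * (Nat.choose K N : ℝ) := by
    have h1 : (K : ℝ) * ((K : ℝ) - 1) * (C1 : ℝ) = ((K : ℝ) - 1) * ((N : ℝ) * (Nat.choose K N : ℝ)) := by
      rw [← hA]; ring
    have h2 : (K : ℝ) * (((K : ℝ) - 1) * (C2 : ℝ)) = (K : ℝ) * (((N : ℝ) - 1) * C1) := by
      rw [hB]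
    nlinarith [hA, hB]
  have coeff : (1 / (Nat.choose K N : ℝ)) * ((C1 : ℝ) - C2)
      = (N : ℝ) * ((K : ℝ) - N) / ((K : ℝ) * ((K : ℝ) - 1)) := by
    rw [one_div, inv_mul_eq_div, div_eq_div_iff hCpos.ne' (mul_ne_zero hK0 hK1)]
    linarith [key]
  calc (1 / (Nat.choose K N : ℝ)) * (((C1 : ℝ) - C2) * ∑ k, ‖v k‖ ^ 2)
      = ((1 / (Nat.choose K N : ℝ)) * ((C1 : ℝ) - C2)) * ∑ k, ‖v k‖ ^ 2 := by ring
    _ = ((N : ℝ) * ((K : ℝ) - N) / ((K : ℝ) * ((K : ℝ) - 1))) * ∑ k, ‖v k‖ ^ 2 := by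
        rw [coeff]
end

section
/- With w̄_k = p_k·w_k + (1−p_k)·w and w̄ = (1/K) Σ_{i=1}^K w̄_i, the average over all N-element subsets S of {1,…,K} of ‖Σ_{k∈S} (w̄_k − w̄)‖² is at most (N(K−N)/(K(K−1))) · Σ_{k=1}^K p_k² · ‖w_k − w‖²; consequently, if ‖w_k − w‖ ≤ c for all k, it is at most (N(K−N)/(K(K−1))) · c² · Σ_{k=1}^K p_k². -/
open Finset
open scoped RealInnerProductSpace

lemma countA_aux {α : Type*} [DecidableEq α] (s : Finset α) (n : ℕ) (hn : 1 ≤ n)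
    (k : α) (hk : k ∈ s) :
    ((s.powersetCard n).filter (fun S => k ∈ S)).card = (s.card - 1).choose (n - 1) := by
  rw [← Finset.card_erase_of_mem hk, ← Finset.card_powersetCard (n-1) (s.erase k)]
  apply Finset.card_nbij' (fun S => S.erase k) (fun T => insert k T)
  · intro S hS
    simp only [mem_coe, mem_filter, mem_powersetCard] at hS
    obtain ⟨⟨hSs, hcard⟩, hkS⟩ := hS
    simp only [mem_coe, mem_powersetCard]
    exact ⟨Finset.erase_subset_erase k hSs, by rw [Finset.card_erase_of_mem hkS, hcard]⟩
  · intro T hT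
    simp only [mem_coe, mem_powersetCard] at hT
    obtain ⟨hTs, hcard⟩ := hT
    have hkT : k ∉ T := fun h => (Finset.mem_erase.1 (hTs h)).1 rfl
    simp only [mem_coe, mem_filter, mem_powersetCard]
    refine ⟨⟨Finset.insert_subset hk (hTs.trans (Finset.erase_subset k s)), ?_⟩,
      Finset.mem_insert_self k T⟩
    rw [Finset.card_insert_of_notMem hkT, hcard]
    omega
  · intro S hS
    simp only [mem_coe, mem_filter] at hS
    exact Finset.insert_erase hS.2
  · intro T hT
    simp only [mem_coe, mem_powersetCard] at hT
    have hkT : k ∉ T := fun h => (Finset.mem_erase.1 (hT.1 h)).1 rfl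
    exact Finset.erase_insert hkT

lemma countB_aux {α : Type*} [DecidableEq α] (s : Finset α) (n : ℕ) (hn : 1 ≤ n)
    (k l : α) (hk : k ∈ s) (hkl : k ≠ l) :
    ((s.powersetCard n).filter (fun S => k ∈ S ∧ l ∉ S)).card
      = ((s.erase l).card - 1).choose (n - 1) := by
  have hk' : k ∈ s.erase l := Finset.mem_erase.2 ⟨hkl, hk⟩
  rw [← countA_aux (s.erase l) n hn k hk']
  congr 1
  ext S
  simp only [mem_filter, mem_powersetCard]
  constructor
  · rintro ⟨⟨hSs, hc⟩, hkS, hlS⟩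
    exact ⟨⟨fun x hx => Finset.mem_erase.2 ⟨fun h => hlS (h ▸ hx), hSs hx⟩, hc⟩, hkS⟩
  · rintro ⟨⟨hSs, hc⟩, hkS⟩
    exact ⟨⟨hSs.trans (Finset.erase_subset l s), hc⟩, hkS,
      fun h => (Finset.mem_erase.1 (hSs h)).1 rfl⟩

lemma key_identity_aux {V : Type*} [NormedAddCommGroup V] [InnerProductSpace ℝ V]
    {α : Type*} [DecidableEq α] [Fintype α] (N : ℕ) (hN : 1 ≤ N)
    (v : α → V) (hv : ∑ k, v k = 0) :
    ∑ S ∈ Finset.powersetCard N (Finset.univ : Finset α), ‖∑ k ∈ S, v k‖ ^ 2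
      = ((Fintype.card α - 2).choose (N - 1) : ℝ) * ∑ k, ‖v k‖ ^ 2 := by
  classical
  set P := Finset.powersetCard N (Finset.univ : Finset α) with hP
  set A : ℝ := ((Fintype.card α - 1).choose (N - 1) : ℝ) with hA
  set D : ℝ := ((Fintype.card α - 2).choose (N - 1) : ℝ) with hD
  have hcnt : ∀ k l : α, k ≠ l →
      (((P.filter fun S => k ∈ S ∧ l ∈ S).card : ℝ)) = A - D := by
    intro k l hkl
    have h1 : ((P.filter fun S => k ∈ S).filter fun S => l ∈ S).card
        + ((P.filter fun S => k ∈ S).filter fun S => ¬ l ∈ S).card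
        = (P.filter fun S => k ∈ S).card :=
      Finset.card_filter_add_card_filter_not _
    rw [Finset.filter_filter, Finset.filter_filter] at h1
    have h2 : (P.filter fun S => k ∈ S).card = (Fintype.card α - 1).choose (N - 1) := by
      rw [hP, countA_aux _ _ hN _ (mem_univ k), card_univ]
    have h3 : (P.filter fun S => k ∈ S ∧ l ∉ S).card
        = (Fintype.card α - 2).choose (N - 1) := by
      rw [hP, countB_aux _ _ hN _ _ (mem_univ k) hkl, card_erase_of_mem (mem_univ l), card_univ,
        Nat.sub_sub]
    rw [h3] at h1
    have : (P.filter fun S => k ∈ S ∧ l ∈ S).card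
        = (Fintype.card α - 1).choose (N - 1) - (Fintype.card α - 2).choose (N - 1) := by omega
    rw [this, hA, hD]
    have hle : (Fintype.card α - 2).choose (N - 1) ≤ (Fintype.card α - 1).choose (N - 1) :=
      Nat.choose_le_choose _ (by omega)
    push_cast [Nat.cast_sub hle]
    ring
  have hcntd : ∀ k : α, (((P.filter fun S => k ∈ S ∧ k ∈ S).card : ℝ)) = A := by
    intro k
    have : (P.filter fun S => k ∈ S ∧ k ∈ S) = P.filter fun S => k ∈ S := by
      simp
    rw [this, hP, countA_aux _ _ hN _ (mem_univ k), card_univ]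
  calc ∑ S ∈ P, ‖∑ k ∈ S, v k‖ ^ 2
      = ∑ S ∈ P, ∑ k, ∑ l, (if k ∈ S ∧ l ∈ S then ⟪v k, v l⟫ else 0) := by
        refine Finset.sum_congr rfl fun S hS => ?_
        rw [← real_inner_self_eq_norm_sq, sum_inner]
        simp_rw [inner_sum]
        rw [eq_comm]
        calc ∑ k, ∑ l, (if k ∈ S ∧ l ∈ S then ⟪v k, v l⟫ else 0)
            = ∑ k, (if k ∈ S then ∑ l, (if l ∈ S then ⟪v k, v l⟫ else 0) else 0) := by
              refine Finset.sum_congr rfl fun k _ => ?_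
              by_cases hk : k ∈ S <;> simp [hk]
          _ = ∑ k ∈ S, ∑ l ∈ S, ⟪v k, v l⟫ := by
              simp_rw [Fintype.sum_ite_mem]
    _ = ∑ k, ∑ l, ∑ S ∈ P, (if k ∈ S ∧ l ∈ S then ⟪v k, v l⟫ else 0) := by
        rw [Finset.sum_comm]
        exact Finset.sum_congr rfl fun k _ => Finset.sum_comm
    _ = ∑ k : α, ∑ l : α, (((P.filter fun S => k ∈ S ∧ l ∈ S).card : ℝ)) * ⟪v k, v l⟫ := by
        refine Finset.sum_congr rfl fun k _ => Finset.sum_congr rfl fun l _ => ?_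
        rw [← Finset.sum_filter, Finset.sum_const, nsmul_eq_mul]
    _ = ∑ k : α, ∑ l : α, ((A - D) * ⟪v k, v l⟫ + if l = k then D * ⟪v k, v l⟫ else 0) := by
        refine Finset.sum_congr rfl fun k _ => Finset.sum_congr rfl fun l _ => ?_
        by_cases h : l = k
        · subst h; rw [if_pos rfl, hcntd l]; ring
        · rw [if_neg h, hcnt k l (fun hh => h hh.symm), add_zero]
    _ = (A - D) * (∑ k, ∑ l, ⟪v k, v l⟫) + D * ∑ k, ⟪v k, v k⟫ := by
        simp_rw [Finset.sum_add_distrib, Finset.sum_ite_eq' Finset.univ, Finset.mem_univ,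
          if_true, ← Finset.mul_sum]
    _ = D * ∑ k, ‖v k‖ ^ 2 := by
        have h0 : ∑ k, ∑ l, ⟪v k, v l⟫ = (0 : ℝ) := by
          simp_rw [← inner_sum]
          rw [← sum_inner, hv, inner_zero_left]
        rw [h0, mul_zero, zero_add]
        congr 1
        exact Finset.sum_congr rfl fun k _ => real_inner_self_eq_norm_sq (v k)

lemma choose_ratio_aux (K N : ℕ) (hK : 2 ≤ K) (hN1 : 1 ≤ N) (hNK : N ≤ K) :
    (K - 2).choose (N - 1) * (K * (K - 1)) = K.choose N * (N * (K - N)) := by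
  have h1 : K * ((K - 1).choose (N - 1)) = K.choose N * N := by
    have : Nat.succ (K - 1) * (K - 1).choose (N - 1) = (Nat.succ (K - 1)).choose (Nat.succ (N - 1)) * Nat.succ (N - 1) := Nat.add_one_mul_choose_eq (K - 1) (N - 1)
    have e1 : (K - 1).succ = K := by omega
    have e2 : N - 1 + 1 = N := by omega
    rw [e1] at this
    rw [Nat.succ_eq_add_one, e2] at this
    simpa [e1, e2] using this
  have h2 : (K - 2).choose (N - 1) * (K - 1) = (K - 1).choose (N - 1) * (K - N) := by
    have := Nat.choose_mul_succ_eq (K - 2) (N - 1)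
    have e1 : K - 2 + 1 = K - 1 := by omega
    have e2 : K - 1 - (N - 1) = K - N := by omega
    rw [e1, e2] at this
    exact this
  calc (K - 2).choose (N - 1) * (K * (K - 1))
      = K * ((K - 2).choose (N - 1) * (K - 1)) := by ring
    _ = K * ((K - 1).choose (N - 1) * (K - N)) := by rw [h2]
    _ = (K * ((K - 1).choose (N - 1))) * (K - N) := by ring
    _ = K.choose N * N * (K - N) := by rw [h1]
    _ = K.choose N * (N * (K - N)) := by ring

/-- Bound on the subset-sampling variance of the expected local models
`w̄_k = p_k·w_k + (1−p_k)·w` (bounding B₂ in Appendix A). -/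
theorem expected_local_models_subset_variance_bound
    {V : Type*} [NormedAddCommGroup V] [InnerProductSpace ℝ V]
    (K N : ℕ) (hK : 2 ≤ K) (hN1 : 1 ≤ N) (hNK : N ≤ K)
    (w : V) (ws : Fin K → V) (p : Fin K → ℝ)
    (hp : ∀ k, 0 ≤ p k ∧ p k ≤ 1) (c : ℝ) (hc : 0 ≤ c) :
    (1 / (Nat.choose K N : ℝ)) *
      ∑ S ∈ Finset.powersetCard N (Finset.univ : Finset (Fin K)),
        ‖∑ k ∈ S, ((p k • ws k + (1 - p k) • w) -
          (1 / (K : ℝ)) • ∑ i, (p i • ws i + (1 - p i) • w))‖ ^ 2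
      ≤ ((N : ℝ) * ((K : ℝ) - N) / ((K : ℝ) * ((K : ℝ) - 1))) *
          ∑ k, (p k) ^ 2 * ‖ws k - w‖ ^ 2
    ∧ ((∀ k, ‖ws k - w‖ ≤ c) →
      (1 / (Nat.choose K N : ℝ)) *
        ∑ S ∈ Finset.powersetCard N (Finset.univ : Finset (Fin K)),
          ‖∑ k ∈ S, ((p k • ws k + (1 - p k) • w) -
            (1 / (K : ℝ)) • ∑ i, (p i • ws i + (1 - p i) • w))‖ ^ 2
        ≤ ((N : ℝ) * ((K : ℝ) - N) / ((K : ℝ) * ((K : ℝ) - 1))) *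
            (c ^ 2 * ∑ k, (p k) ^ 2)) := by
  have hK0 : (K : ℝ) ≠ 0 := by positivity
  set u : Fin K → V := fun k => p k • (ws k - w) with hu
  set v : Fin K → V := fun k => u k - (1 / (K : ℝ)) • ∑ i, u i with hvdef
  -- rewrite the summands
  have hsum : ∑ i, (p i • ws i + (1 - p i) • w) = (∑ i, u i) + (K : ℝ) • w := by
    have h : ∀ i : Fin K, p i • ws i + (1 - p i) • w = u i + w := fun i => by
      rw [hu]; module
    simp_rw [h, Finset.sum_add_distrib, Finset.sum_const, Finset.card_univ, Fintype.card_fin,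
      ← Nat.cast_smul_eq_nsmul ℝ]
  have hveq : ∀ k : Fin K, (p k • ws k + (1 - p k) • w) -
      (1 / (K : ℝ)) • ∑ i, (p i • ws i + (1 - p i) • w) = v k := by
    intro k
    rw [hsum, hvdef, hu]
    match_scalars <;> field_simp <;> ring
  have hv0 : ∑ k, v k = 0 := by
    rw [hvdef]
    rw [Finset.sum_sub_distrib, Finset.sum_const, Finset.card_univ, Fintype.card_fin,
      ← Nat.cast_smul_eq_nsmul ℝ, smul_smul]
    have : (K : ℝ) * (1 / K) = 1 := by field_simp
    rw [this, one_smul, sub_self]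
  -- the key combinatorial identity
  have hkey : ∑ S ∈ Finset.powersetCard N (Finset.univ : Finset (Fin K)),
      ‖∑ k ∈ S, ((p k • ws k + (1 - p k) • w) -
        (1 / (K : ℝ)) • ∑ i, (p i • ws i + (1 - p i) • w))‖ ^ 2
      = ((K - 2).choose (N - 1) : ℝ) * ∑ k, ‖v k‖ ^ 2 := by
    have hrw : ∀ S : Finset (Fin K), ∑ k ∈ S, ((p k • ws k + (1 - p k) • w) -
        (1 / (K : ℝ)) • ∑ i, (p i • ws i + (1 - p i) • w)) = ∑ k ∈ S, v k :=
      fun S => Finset.sum_congr rfl fun k _ => hveq k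
    simp_rw [hrw]
    have := key_identity_aux (V := V) (α := Fin K) N hN1 v hv0
    rwa [Fintype.card_fin] at this
  -- variance bound
  have hub : ∑ k, ‖v k‖ ^ 2 ≤ ∑ k, (p k) ^ 2 * ‖ws k - w‖ ^ 2 := by
    have hnorm : ∀ k : Fin K, ‖u k‖ ^ 2 = (p k) ^ 2 * ‖ws k - w‖ ^ 2 := by
      intro k
      rw [hu]
      simp only [norm_smul, Real.norm_eq_abs, mul_pow, sq_abs]
    calc ∑ k, ‖v k‖ ^ 2 ≤ ∑ k, ‖u k‖ ^ 2 := by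
          rw [hvdef]
          set m : V := (1 / (K : ℝ)) • ∑ i, u i with hm
          have hsm : ∑ i, u i = (K : ℝ) • m := by
            rw [hm, smul_smul]
            field_simp
            rw [one_smul]
          calc ∑ k, ‖u k - m‖ ^ 2
              = ∑ k, (‖u k‖ ^ 2 - 2 * ⟪u k, m⟫ + ‖m‖ ^ 2) :=
                Finset.sum_congr rfl fun k _ => norm_sub_sq_real _ _
            _ = (∑ k, ‖u k‖ ^ 2) - 2 * ⟪∑ i, u i, m⟫ + (K : ℝ) * ‖m‖ ^ 2 := by
                rw [Finset.sum_add_distrib, Finset.sum_sub_distrib, ← Finset.mul_sum,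
                  ← sum_inner, Finset.sum_const, Finset.card_univ, Fintype.card_fin,
                  nsmul_eq_mul]
            _ = (∑ k, ‖u k‖ ^ 2) - (K : ℝ) * ‖m‖ ^ 2 := by
                rw [hsm, real_inner_smul_left, real_inner_self_eq_norm_sq]
                ring
            _ ≤ ∑ k, ‖u k‖ ^ 2 := by
                have : 0 ≤ (K : ℝ) * ‖m‖ ^ 2 := by positivity
                linarith
      _ = ∑ k, (p k) ^ 2 * ‖ws k - w‖ ^ 2 := Finset.sum_congr rfl fun k _ => hnorm k
  -- coefficient identity
  have hCpos : 0 < (K.choose N : ℝ) := by exact_mod_cast Nat.choose_pos hNK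
  have hcoef : ((K - 2).choose (N - 1) : ℝ) / (K.choose N : ℝ)
      = (N : ℝ) * ((K : ℝ) - N) / ((K : ℝ) * ((K : ℝ) - 1)) := by
    have h2 : (2 : ℝ) ≤ (K : ℝ) := by exact_mod_cast hK
    have hKK : (0 : ℝ) < (K : ℝ) * ((K : ℝ) - 1) := by nlinarith
    rw [div_eq_div_iff hCpos.ne' hKK.ne']
    have e1 : ((K - 1 : ℕ) : ℝ) = (K : ℝ) - 1 := by
      push_cast [Nat.cast_sub (show 1 ≤ K by omega)]; ring
    have e2 : ((K - N : ℕ) : ℝ) = (K : ℝ) - N := Nat.cast_sub hNK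
    rw [← e1, ← e2]
    have h := choose_ratio_aux K N hK hN1 hNK
    have : (((K - 2).choose (N - 1) * (K * (K - 1)) : ℕ) : ℝ)
        = ((K.choose N * (N * (K - N)) : ℕ) : ℝ) := by exact_mod_cast h
    push_cast at this
    linarith
  have hcoef_nonneg : 0 ≤ (N : ℝ) * ((K : ℝ) - N) / ((K : ℝ) * ((K : ℝ) - 1)) := by
    rw [← hcoef]; positivity
  have part1 : (1 / (Nat.choose K N : ℝ)) *
      ∑ S ∈ Finset.powersetCard N (Finset.univ : Finset (Fin K)),
        ‖∑ k ∈ S, ((p k • ws k + (1 - p k) • w) -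
          (1 / (K : ℝ)) • ∑ i, (p i • ws i + (1 - p i) • w))‖ ^ 2
      ≤ ((N : ℝ) * ((K : ℝ) - N) / ((K : ℝ) * ((K : ℝ) - 1))) *
          ∑ k, (p k) ^ 2 * ‖ws k - w‖ ^ 2 := by
    rw [hkey]
    calc (1 / (K.choose N : ℝ)) * (((K - 2).choose (N - 1) : ℝ) * ∑ k, ‖v k‖ ^ 2)
        = (((K - 2).choose (N - 1) : ℝ) / (K.choose N : ℝ)) * ∑ k, ‖v k‖ ^ 2 := by ring
      _ ≤ (((K - 2).choose (N - 1) : ℝ) / (K.choose N : ℝ)) *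
            ∑ k, (p k) ^ 2 * ‖ws k - w‖ ^ 2 :=
          mul_le_mul_of_nonneg_left hub (by positivity)
      _ = ((N : ℝ) * ((K : ℝ) - N) / ((K : ℝ) * ((K : ℝ) - 1))) *
            ∑ k, (p k) ^ 2 * ‖ws k - w‖ ^ 2 := by rw [hcoef]
  refine ⟨part1, fun hbound => part1.trans ?_⟩
  apply mul_le_mul_of_nonneg_left _ hcoef_nonneg
  rw [Finset.mul_sum]
  apply Finset.sum_le_sum
  intro k _
  have h1 : ‖ws k - w‖ ^ 2 ≤ c ^ 2 := by
    nlinarith [norm_nonneg (ws k - w), hbound k]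
  have h2 : 0 ≤ (p k) ^ 2 := sq_nonneg _
  calc (p k) ^ 2 * ‖ws k - w‖ ^ 2 ≤ (p k) ^ 2 * c ^ 2 :=
        mul_le_mul_of_nonneg_left h1 h2
    _ = c ^ 2 * (p k) ^ 2 := by ring
end

section
/- With ŵ_k(e) = e(k)·w_k + (1−e(k))·w and w̄_k = p_k·w_k + (1−p_k)·w, the expectation over N-element subsets S and Bernoulli functions e of ‖Σ_{k∈S} (ŵ_k(e) − w̄_k)‖² is at most (N²/K) · Σ_{k=1}^K p_k(1−p_k) · ‖w_k − w‖²; consequently, if ‖w_k − w‖ ≤ c for all k, it is at most (N²/K) · c² · Σ_{k=1}^K p_k(1−p_k). -/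
lemma sum_pi_bool {K : ℕ} (h : Fin K → Bool → ℝ) :
    ∑ e : Fin K → Bool, ∏ i, h i (e i) = ∏ i, (h i true + h i false) := by
  have := Finset.prod_univ_sum (fun _ : Fin K => (Finset.univ : Finset Bool)) h
  rw [Fintype.piFinset_univ] at this
  rw [← this]
  simp

lemma card_subsets_containing {K N : ℕ} (hN1 : 1 ≤ N) (k : Fin K) :
    ((Finset.powersetCard N (Finset.univ : Finset (Fin K))).filter (fun S => k ∈ S)).card
      = Nat.choose (K - 1) (N - 1) := by
  have hcard : ((Finset.univ : Finset (Fin K)).erase k).card = K - 1 := by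
    simp [Finset.card_erase_of_mem]
  rw [← hcard, ← Finset.card_powersetCard (N-1) ((Finset.univ : Finset (Fin K)).erase k)]
  refine Finset.card_nbij' (fun S => Finset.erase S k) (fun T => insert k T) ?_ ?_ ?_ ?_
  · intro S hS
    simp only [Finset.mem_coe, Finset.mem_filter, Finset.mem_powersetCard] at hS
    simp only [Finset.mem_coe, Finset.mem_powersetCard]
    exact ⟨Finset.erase_subset_erase k hS.1.1,
      by rw [Finset.card_erase_of_mem hS.2, hS.1.2]⟩
  · intro T hT
    simp only [Finset.mem_coe, Finset.mem_powersetCard] at hT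
    have hk : k ∉ T := fun h => (Finset.mem_erase.1 (hT.1 h)).1 rfl
    simp only [Finset.mem_coe, Finset.mem_filter, Finset.mem_powersetCard]
    refine ⟨⟨Finset.subset_univ _, ?_⟩, Finset.mem_insert_self _ _⟩
    rw [Finset.card_insert_of_notMem hk, hT.2]
    omega
  · intro S hS
    simp only [Finset.mem_coe, Finset.mem_filter] at hS
    exact Finset.insert_erase hS.2
  · intro T hT
    simp only [Finset.mem_coe, Finset.mem_powersetCard] at hT
    have hk : k ∉ T := fun h => (Finset.mem_erase.1 (hT.1 h)).1 rfl
    exact Finset.erase_insert hk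

lemma exp_single {K : ℕ} (p : Fin K → ℝ) (f : Bool → ℝ) (j : Fin K) :
    ∑ e : Fin K → Bool, (∏ i, if e i then p i else 1 - p i) * f (e j)
      = p j * f true + (1 - p j) * f false := by
  have h1 : ∀ e : Fin K → Bool,
      (∏ i, if e i then p i else 1 - p i) * f (e j)
        = ∏ i, ((if e i then p i else 1 - p i) * (if i = j then f (e i) else 1)) := by
    intro e
    rw [Finset.prod_mul_distrib]
    congr 1
    simp [Finset.prod_ite_eq']
  simp_rw [h1]
  rw [sum_pi_bool (fun i b => (if b then p i else 1 - p i) * (if i = j then f b else 1))]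
  have h2 : ∀ i : Fin K,
      ((if (true : Bool) then p i else 1 - p i) * (if i = j then f true else 1)
        + (if (false : Bool) then p i else 1 - p i) * (if i = j then f false else 1))
      = if i = j then p j * f true + (1 - p j) * f false else 1 := by
    intro i
    by_cases h : i = j
    · subst h; simp
    · simp only [if_neg h]; simp
  refine Eq.trans (Finset.prod_congr rfl (fun i _ => h2 i)) ?_
  simp [Finset.prod_ite_eq']

lemma exp_pair {K : ℕ} (p : Fin K → ℝ) (f g : Bool → ℝ) (j k : Fin K) (hjk : j ≠ k) :
    ∑ e : Fin K → Bool, (∏ i, if e i then p i else 1 - p i) * (f (e j) * g (e k))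
      = (p j * f true + (1 - p j) * f false) * (p k * g true + (1 - p k) * g false) := by
  have h1 : ∀ e : Fin K → Bool,
      (∏ i, if e i then p i else 1 - p i) * (f (e j) * g (e k))
        = ∏ i, ((if e i then p i else 1 - p i)
            * ((if i = j then f (e i) else 1) * (if i = k then g (e i) else 1))) := by
    intro e
    rw [Finset.prod_mul_distrib, Finset.prod_mul_distrib]
    simp [Finset.prod_ite_eq']
  simp_rw [h1]
  rw [sum_pi_bool (fun i b => (if b then p i else 1 - p i)
      * ((if i = j then f b else 1) * (if i = k then g b else 1)))]
  have h2 : ∀ i : Fin K,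
      ((if (true : Bool) then p i else 1 - p i)
          * ((if i = j then f true else 1) * (if i = k then g true else 1))
        + (if (false : Bool) then p i else 1 - p i)
          * ((if i = j then f false else 1) * (if i = k then g false else 1)))
      = (if i = j then p j * f true + (1 - p j) * f false else 1)
        * (if i = k then p k * g true + (1 - p k) * g false else 1) := by
    intro i
    by_cases h : i = j
    · subst h; simp [hjk]
    · by_cases h' : i = k
      · subst h'; simp [h, Ne.symm hjk]
      · simp only [if_neg h, if_neg h']; simp
  refine Eq.trans (Finset.prod_congr rfl (fun i _ => h2 i)) ?_
  rw [Finset.prod_mul_distrib]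
  simp [Finset.prod_ite_eq']

lemma inner_sum_eq {V : Type*} [NormedAddCommGroup V] [InnerProductSpace ℝ V]
    {K : ℕ} (w : V) (ws : Fin K → V) (p : Fin K → ℝ) (S : Finset (Fin K)) :
    ∑ e : Fin K → Bool,
      (∏ k, if e k then p k else 1 - p k) *
        ‖∑ k ∈ S, ((if e k then ws k else w) - (p k • ws k + (1 - p k) • w))‖ ^ 2
    = ∑ k ∈ S, p k * (1 - p k) * ‖ws k - w‖ ^ 2 := by
  set cf : Fin K → Bool → ℝ := fun k b => if b then 1 - p k else -(p k) with hcf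
  have hstep : ∀ (k : Fin K) (b : Bool),
      (if b then ws k else w) - (p k • ws k + (1 - p k) • w) = cf k b • (ws k - w) := by
    intro k b
    cases b <;> simp [hcf, smul_sub, sub_smul, one_smul, neg_smul] <;> abel
  have hE : ∀ j k : Fin K,
      (∑ e : Fin K → Bool, (∏ i, if e i then p i else 1 - p i) * (cf j (e j) * cf k (e k)))
        = if j = k then p j * (1 - p j) else 0 := by
    intro j k
    by_cases hjk : j = k
    · subst hjk
      rw [if_pos rfl, exp_single p (fun b => cf j b * cf j b) j]
      simp [hcf]; ring
    · rw [if_neg hjk, exp_pair p (cf j) (cf k) j k hjk]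
      have : p j * cf j true + (1 - p j) * cf j false = 0 := by simp [hcf]; ring
      rw [this, zero_mul]
  have hnorm : ∀ e : Fin K → Bool,
      ‖∑ k ∈ S, ((if e k then ws k else w) - (p k • ws k + (1 - p k) • w))‖ ^ 2
        = ∑ j ∈ S, ∑ k ∈ S, (cf j (e j) * cf k (e k)) * (inner ℝ (ws j - w) (ws k - w) : ℝ) := by
    intro e
    simp_rw [hstep]
    rw [← real_inner_self_eq_norm_sq, sum_inner]
    refine Finset.sum_congr rfl fun j _ => ?_
    rw [inner_sum]
    refine Finset.sum_congr rfl fun k _ => ?_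
    rw [real_inner_smul_left, real_inner_smul_right]; ring
  calc ∑ e : Fin K → Bool,
      (∏ k, if e k then p k else 1 - p k) *
        ‖∑ k ∈ S, ((if e k then ws k else w) - (p k • ws k + (1 - p k) • w))‖ ^ 2
      = ∑ j ∈ S, ∑ k ∈ S,
          (∑ e : Fin K → Bool, (∏ i, if e i then p i else 1 - p i) * (cf j (e j) * cf k (e k)))
            * (inner ℝ (ws j - w) (ws k - w) : ℝ) := by
        simp_rw [hnorm, Finset.mul_sum, Finset.sum_mul]
        rw [Finset.sum_comm]
        refine Finset.sum_congr rfl fun j _ => ?_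
        rw [Finset.sum_comm]
        refine Finset.sum_congr rfl fun k _ => ?_
        refine Finset.sum_congr rfl fun e _ => ?_
        ring
    _ = ∑ k ∈ S, p k * (1 - p k) * ‖ws k - w‖ ^ 2 := by
        simp_rw [hE, ite_mul, zero_mul]
        rw [Finset.sum_comm]
        refine Finset.sum_congr rfl fun k hk => ?_
        rw [Finset.sum_ite_eq' S k]
        simp [hk, real_inner_self_eq_norm_sq]

lemma sum_over_subsets {K N : ℕ} (hN1 : 1 ≤ N) (a : Fin K → ℝ) :
    ∑ S ∈ Finset.powersetCard N (Finset.univ : Finset (Fin K)), ∑ k ∈ S, a k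
      = (Nat.choose (K - 1) (N - 1) : ℝ) * ∑ k, a k := by
  have h1 : ∀ S ∈ Finset.powersetCard N (Finset.univ : Finset (Fin K)),
      ∑ k ∈ S, a k = ∑ k : Fin K, if k ∈ S then a k else 0 := by
    intro S _
    rw [Finset.sum_ite_mem, Finset.univ_inter]
  rw [Finset.sum_congr rfl h1, Finset.sum_comm]
  rw [Finset.mul_sum]
  refine Finset.sum_congr rfl fun k _ => ?_
  rw [← Finset.sum_filter, Finset.sum_const, card_subsets_containing hN1 k]
  simp [mul_comm]


/-- Bound on B₁ in Appendix A: the expected squared norm of the deviation of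
the GoMORE local models `ŵ_k(e) = e(k)·w_k + (1−e(k))·w` from their means
`w̄_k = p_k·w_k + (1−p_k)·w`, summed over a random `N`-element subset. -/
theorem gomore_deviation_bound
    {V : Type*} [NormedAddCommGroup V] [InnerProductSpace ℝ V]
    (K N : ℕ) (hK : 1 ≤ K) (hN1 : 1 ≤ N) (hNK : N ≤ K)
    (w : V) (ws : Fin K → V) (p : Fin K → ℝ)
    (hp : ∀ k, 0 ≤ p k ∧ p k ≤ 1) (c : ℝ) (hc : 0 ≤ c) :
    (1 / (Nat.choose K N : ℝ)) *
      ∑ S ∈ Finset.powersetCard N (Finset.univ : Finset (Fin K)),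
        ∑ e : Fin K → Bool,
          (∏ k, if e k then p k else 1 - p k) *
            ‖∑ k ∈ S, ((if e k then ws k else w) -
              (p k • ws k + (1 - p k) • w))‖ ^ 2
      ≤ ((N : ℝ) ^ 2 / (K : ℝ)) * ∑ k, p k * (1 - p k) * ‖ws k - w‖ ^ 2
    ∧ ((∀ k, ‖ws k - w‖ ≤ c) →
      (1 / (Nat.choose K N : ℝ)) *
        ∑ S ∈ Finset.powersetCard N (Finset.univ : Finset (Fin K)),
          ∑ e : Fin K → Bool,
            (∏ k, if e k then p k else 1 - p k) *
              ‖∑ k ∈ S, ((if e k then ws k else w) -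
                (p k • ws k + (1 - p k) • w))‖ ^ 2
        ≤ ((N : ℝ) ^ 2 / (K : ℝ)) * c ^ 2 * ∑ k, p k * (1 - p k)) := by
  have hpnn : ∀ k : Fin K, 0 ≤ p k * (1 - p k) :=
    fun k => mul_nonneg (hp k).1 (by linarith [(hp k).2])
  have hK' : (0 : ℝ) < K := by exact_mod_cast Nat.lt_of_lt_of_le Nat.zero_lt_one hK
  have hC : (0 : ℝ) < (Nat.choose K N : ℝ) := by
    exact_mod_cast Nat.choose_pos hNK
  have hnat : K * Nat.choose (K - 1) (N - 1) = Nat.choose K N * N := by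
    have h := Nat.add_one_mul_choose_eq (K - 1) (N - 1)
    have e1 : K - 1 + 1 = K := by omega
    have e2 : N - 1 + 1 = N := by omega
    rwa [e1, e2] at h
  have hratio : (1 / (Nat.choose K N : ℝ)) * (Nat.choose (K - 1) (N - 1) : ℝ)
      = (N : ℝ) / (K : ℝ) := by
    have hcast : (K : ℝ) * (Nat.choose (K - 1) (N - 1) : ℝ)
        = (Nat.choose K N : ℝ) * (N : ℝ) := by exact_mod_cast hnat
    field_simp
    linarith [hcast]
  have hmain : (1 / (Nat.choose K N : ℝ)) *
      ∑ S ∈ Finset.powersetCard N (Finset.univ : Finset (Fin K)),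
        ∑ e : Fin K → Bool,
          (∏ k, if e k then p k else 1 - p k) *
            ‖∑ k ∈ S, ((if e k then ws k else w) -
              (p k • ws k + (1 - p k) • w))‖ ^ 2
      = ((N : ℝ) / (K : ℝ)) * ∑ k, p k * (1 - p k) * ‖ws k - w‖ ^ 2 := by
    rw [Finset.sum_congr rfl (fun S _ => inner_sum_eq w ws p S),
      sum_over_subsets hN1, ← mul_assoc, hratio]
  have ha : 0 ≤ ∑ k, p k * (1 - p k) * ‖ws k - w‖ ^ 2 :=
    Finset.sum_nonneg fun k _ => mul_nonneg (hpnn k) (by positivity)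
  have hNsq : (N : ℝ) / (K : ℝ) ≤ (N : ℝ) ^ 2 / (K : ℝ) := by
    have h1N : (1 : ℝ) ≤ (N : ℝ) := by exact_mod_cast hN1
    rw [div_le_div_iff₀ hK' hK']
    nlinarith [mul_le_mul_of_nonneg_right (show (N:ℝ) ≤ (N:ℝ)^2 by nlinarith) hK'.le]
  constructor
  · rw [hmain]
    exact mul_le_mul_of_nonneg_right hNsq ha
  · intro hb
    rw [hmain]
    have hSig : 0 ≤ ∑ k, p k * (1 - p k) := Finset.sum_nonneg fun k _ => hpnn k
    have h1 : ∑ k, p k * (1 - p k) * ‖ws k - w‖ ^ 2 ≤ c ^ 2 * ∑ k, p k * (1 - p k) := by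
      rw [Finset.mul_sum]
      refine Finset.sum_le_sum fun k _ => ?_
      have hsq : ‖ws k - w‖ ^ 2 ≤ c ^ 2 := by
        have := hb k
        nlinarith [norm_nonneg (ws k - w)]
      calc p k * (1 - p k) * ‖ws k - w‖ ^ 2 ≤ p k * (1 - p k) * c ^ 2 :=
            mul_le_mul_of_nonneg_left hsq (hpnn k)
        _ = c ^ 2 * (p k * (1 - p k)) := by ring
    calc ((N : ℝ) / (K : ℝ)) * ∑ k, p k * (1 - p k) * ‖ws k - w‖ ^ 2
        ≤ ((N : ℝ) / (K : ℝ)) * (c ^ 2 * ∑ k, p k * (1 - p k)) :=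
          mul_le_mul_of_nonneg_left h1 (by positivity)
      _ ≤ ((N : ℝ) ^ 2 / (K : ℝ)) * c ^ 2 * ∑ k, p k * (1 - p k) := by
          rw [← mul_assoc]
          exact mul_le_mul_of_nonneg_right
            (mul_le_mul_of_nonneg_right hNsq (sq_nonneg c)) hSig
end
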